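/- arXiv:2405.19312 — 2 statements merged into one kernel-verified Lean document; each statement's English description precedes it below -/
import Mathlib

section
/- Under the two-stage IBD randomization, the Horvitz–Thompson estimator is unbiased and its covariance decomposes into between-block and within-block parts: E[Ŷ_HT(z)] = Ȳ(z;w) for every z = 1,…,T, and cov(Ŷ_HT) = K^{-1}(B_HT + W) as T×T matrices. Consequently, for any contrast g with Σ_z g_z = 0, E[τ̂_HT(g)] = τ_w(g) and var(τ̂_HT(g)) = K^{-1} g^T (B_HT + W) g. (Theorem 1) -/
open Finset Filter MeasureTheory
open scoped BigOperators Topology Classical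

noncomputable section

/-- Expectation of `f` under the uniform distribution on the finite set `Ω`. -/
def fexp {α : Type*} (Ω : Finset α) (f : α → ℝ) : ℝ := (∑ ω ∈ Ω, f ω) / Ω.card

/-- Probability of the event `e` under the uniform distribution on `Ω`. -/
def fpr {α : Type*} (Ω : Finset α) (e : α → Prop) : ℝ :=
  ((Ω.filter e).card : ℝ) / Ω.card

/-- Covariance of `f` and `g` under the uniform distribution on `Ω`. -/
def fcov {α : Type*} (Ω : Finset α) (f g : α → ℝ) : ℝ :=
  fexp Ω (fun ω => (f ω - fexp Ω f) * (g ω - fexp Ω g))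

/-- Variance of `f` under the uniform distribution on `Ω`. -/
def fvar {α : Type*} (Ω : Finset α) (f : α → ℝ) : ℝ := fcov Ω f f

/-- Conditional expectation of `f` given the event `e`, under the uniform distribution on `Ω`. -/
def fcexp {α : Type*} (Ω : Finset α) (e : α → Prop) (f : α → ℝ) : ℝ :=
  (∑ ω ∈ Ω.filter e, f ω) / (Ω.filter e).card

/-- An incomplete block design on a finite population, with `T` treatments. -/
structure IBD (T : ℕ) where
  /-- number of blocks -/
  K : ℕ
  hK : 0 < K
  /-- number of treatments assigned to each block -/
  t : ℕ
  ht : 2 ≤ t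
  htT : t < T
  /-- number of units -/
  N : ℕ
  /-- block membership -/
  b : Fin N → Fin K
  /-- potential outcomes -/
  Y : Fin N → Fin T → ℝ
  /-- block weights -/
  w : Fin K → ℝ
  hw : ∑ k, w k = 1
  /-- multiplicity of each treatment subset in the design; the support is `𝒲` -/
  r : Finset (Fin T) → ℕ
  hrcard : ∀ ω, r ω ≠ 0 → ω.card = t
  hrK : ∑ ω : Finset (Fin T), r ω = K
  hdvd : ∀ k : Fin K, t ∣ (Finset.univ.filter (fun i => b i = k)).card
  hnpos : ∀ k : Fin K, 0 < (Finset.univ.filter (fun i => b i = k)).card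

namespace IBD

variable {T : ℕ} (D : IBD T)

/-- The units in block `k`. -/
def blk (k : Fin D.K) : Finset (Fin D.N) := Finset.univ.filter (fun i => D.b i = k)

/-- Block size `n_k`. -/
def n (k : Fin D.K) : ℕ := (D.blk k).card

/-- Block mean of potential outcomes, `Ȳ_k(z)`. -/
def Ybar (k : Fin D.K) (z : Fin T) : ℝ := (∑ i ∈ D.blk k, D.Y i z) / (D.n k : ℝ)

/-- Weighted average of potential outcomes, `Ȳ(z;w)`. -/
def Ybarw (z : Fin T) : ℝ := ∑ k, D.w k * D.Ybar k z

/-- Contrast estimand `τ_w(g)`. -/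
def tauw (g : Fin T → ℝ) : ℝ := ∑ z, g z * D.Ybarw z

/-- `L_z`: number of blocks whose treatment subset contains `z`. -/
def Lcount (z : Fin T) : ℕ :=
  ∑ ω ∈ Finset.univ.filter (fun ω : Finset (Fin T) => z ∈ ω), D.r ω

/-- `l_{z,z'}`: number of blocks whose treatment subset contains both `z` and `z'`. -/
def lcount (z z' : Fin T) : ℕ :=
  ∑ ω ∈ Finset.univ.filter (fun ω : Finset (Fin T) => z ∈ ω ∧ z' ∈ ω), D.r ω

/-- `p_z = L_z/K`. -/
def p (z : Fin T) : ℝ := (D.Lcount z : ℝ) / (D.K : ℝ)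

/-- `q_{z,z'} = l_{z,z'}/K`. -/
def q (z z' : Fin T) : ℝ := (D.lcount z z' : ℝ) / (D.K : ℝ)

/-- Within-block variance `S_k²(z)`. -/
def Sk2 (k : Fin D.K) (z : Fin T) : ℝ :=
  (∑ i ∈ D.blk k, (D.Y i z - D.Ybar k z) ^ 2) / ((D.n k : ℝ) - 1)

/-- Within-block treatment-effect heterogeneity `S_k²(τ(z,z'))`. -/
def Sk2tau (k : Fin D.K) (z z' : Fin T) : ℝ :=
  (∑ i ∈ D.blk k, (D.Y i z - D.Y i z' - (D.Ybar k z - D.Ybar k z')) ^ 2) / ((D.n k : ℝ) - 1)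

/-- Between-block variance `S_HT²(z)`. -/
def SHT2 (z : Fin T) : ℝ :=
  (∑ k, ((D.K : ℝ) * D.w k * D.Ybar k z - D.Ybarw z) ^ 2) / ((D.K : ℝ) - 1)

/-- Between-block heterogeneity `S_HT²(τ(z,z'))`. -/
def SHT2tau (z z' : Fin T) : ℝ :=
  (∑ k, ((D.K : ℝ) * D.w k * (D.Ybar k z - D.Ybar k z') - (D.Ybarw z - D.Ybarw z')) ^ 2) /
    ((D.K : ℝ) - 1)

/-- Between-block variance `S_Haj²(z)` for the Hájek estimator. -/
def SHaj2 (z : Fin T) : ℝ :=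
  (∑ k, ((D.K : ℝ) * D.w k) ^ 2 * (D.Ybar k z - D.Ybarw z) ^ 2) / ((D.K : ℝ) - 1)

/-- Between-block heterogeneity `S_Haj²(τ(z,z'))`. -/
def SHaj2tau (z z' : Fin T) : ℝ :=
  (∑ k, ((D.K : ℝ) * D.w k) ^ 2 *
    (D.Ybar k z - D.Ybar k z' - (D.Ybarw z - D.Ybarw z')) ^ 2) / ((D.K : ℝ) - 1)

/-- `S_HT²(τ_w(g))`. -/
def SHT2taug (g : Fin T → ℝ) : ℝ :=
  (∑ k, ((D.K : ℝ) * D.w k * (∑ z, g z * D.Ybar k z) - ∑ z, g z * D.Ybarw z) ^ 2) /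
    ((D.K : ℝ) - 1)

/-- `S_Haj²(τ_w(g))`. -/
def SHaj2taug (g : Fin T → ℝ) : ℝ :=
  (∑ k, ((D.K : ℝ) * D.w k * ((∑ z, g z * D.Ybar k z) - ∑ z, g z * D.Ybarw z)) ^ 2) /
    ((D.K : ℝ) - 1)

/-- `S_k²(τ_w(g))`. -/
def Sk2taug (k : Fin D.K) (g : Fin T → ℝ) : ℝ :=
  (∑ i ∈ D.blk k, ((D.K : ℝ) * D.w k * ((∑ z, g z * D.Y i z) - ∑ z, g z * D.Ybar k z)) ^ 2) /
    ((D.n k : ℝ) - 1)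

/-- Between-block covariance matrix `B_HT`. -/
def BHT (z z' : Fin T) : ℝ :=
  (1 / 2) * ((D.q z z' / (D.p z * D.p z') - 1) * (D.SHT2 z + D.SHT2 z' - D.SHT2tau z z'))

/-- Between-block covariance matrix `B_Haj`. -/
def BHaj (z z' : Fin T) : ℝ :=
  (1 / 2) * ((D.q z z' / (D.p z * D.p z') - 1) * (D.SHaj2 z + D.SHaj2 z' - D.SHaj2tau z z'))

/-- Within-block covariance matrix `W`. -/
def Wmat (z z' : Fin T) : ℝ :=
  if z = z' then
    (1 / D.p z) * ((1 / (D.K : ℝ)) * ∑ k, ((D.K : ℝ) * D.w k) ^ 2 *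
      (((D.t : ℝ) - 1) * D.Sk2 k z / (D.n k : ℝ)))
  else
    -(D.q z z' / (2 * D.p z * D.p z')) * ((1 / (D.K : ℝ)) * ∑ k, ((D.K : ℝ) * D.w k) ^ 2 *
      ((D.Sk2 k z + D.Sk2 k z' - D.Sk2tau k z z') / (D.n k : ℝ)))

/-- `Σ_HT = B_HT + W`. -/
def SigmaHT (z z' : Fin T) : ℝ := D.BHT z z' + D.Wmat z z'

/-- `Σ_Haj = B_Haj + W`. -/
def SigmaHaj (z z' : Fin T) : ℝ := D.BHaj z z' + D.Wmat z z'

/-- The type of a complete treatment assignment: stage 1 (subsets to blocks) and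
stage 2 (treatments to units). -/
abbrev Assign : Type := (Fin D.K → Finset (Fin T)) × (Fin D.N → Fin T)

/-- Validity of the stage-1 assignment: each subset `ω` is assigned to exactly `r_ω` blocks. -/
def ValidR (R : Fin D.K → Finset (Fin T)) : Prop :=
  ∀ ω : Finset (Fin T), (Finset.univ.filter (fun k => R k = ω)).card = D.r ω

/-- Validity of the stage-2 assignment: within block `k`, exactly `n_k/t` units receive
each treatment of `R k`. -/
def ValidZ (R : Fin D.K → Finset (Fin T)) (Z : Fin D.N → Fin T) : Prop :=
  (∀ i, Z i ∈ R (D.b i)) ∧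
  ∀ k : Fin D.K, ∀ z ∈ R k, ((D.blk k).filter (fun i => Z i = z)).card = D.n k / D.t

/-- The set of all valid assignments; the two-stage IBD randomization is the uniform
distribution on this set. -/
def Omega : Finset D.Assign :=
  Finset.univ.filter (fun a => D.ValidR a.1 ∧ D.ValidZ a.1 a.2)

/-- Observed block mean `Ŷ_k(z)` (zero if `z` is not assigned to block `k`). -/
def Yhatk (a : D.Assign) (k : Fin D.K) (z : Fin T) : ℝ :=
  if z ∈ a.1 k then
    (∑ i ∈ (D.blk k).filter (fun i => a.2 i = z), D.Y i z) / ((D.n k : ℝ) / (D.t : ℝ))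
  else 0

/-- Horvitz–Thompson estimator `Ŷ_HT(z)`. -/
def YhatHT (a : D.Assign) (z : Fin T) : ℝ := ∑ k, D.w k * D.Yhatk a k z / D.p z

/-- `1̂_HT(z)`, the Horvitz–Thompson estimator of the constant 1. -/
def onehatHT (a : D.Assign) (z : Fin T) : ℝ :=
  ∑ k, D.w k * (if z ∈ a.1 k then (1 : ℝ) else 0) / D.p z

/-- Hájek estimator `Ŷ_Haj(z)`. -/
def YhatHaj (a : D.Assign) (z : Fin T) : ℝ := D.YhatHT a z / D.onehatHT a z

/-- Horvitz–Thompson contrast estimator `τ̂_HT(g)`. -/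
def tauhatHT (a : D.Assign) (g : Fin T → ℝ) : ℝ := ∑ z, g z * D.YhatHT a z

/-- Hájek contrast estimator `τ̂_Haj(g)`. -/
def tauhatHaj (a : D.Assign) (g : Fin T → ℝ) : ℝ := ∑ z, g z * D.YhatHaj a z

end IBD
namespace IBD

variable {T : ℕ} (D : IBD T)

/-- Sample within-block variance `s_k²(z)` (zero if `z ∉ R_k`). -/
def sk2 (a : D.Assign) (k : Fin D.K) (z : Fin T) : ℝ :=
  if z ∈ a.1 k then
    (∑ i ∈ (D.blk k).filter (fun i => a.2 i = z), (D.Y i z - D.Yhatk a k z) ^ 2) /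
      ((D.n k : ℝ) / (D.t : ℝ) - 1)
  else 0

/-- Sample between-block variance `s_HT²(z)`. -/
def sHT2 (a : D.Assign) (z : Fin T) : ℝ :=
  (∑ k, if z ∈ a.1 k then ((D.K : ℝ) * D.w k * D.Yhatk a k z - D.YhatHT a z) ^ 2 else 0) /
    ((D.Lcount z : ℝ) - 1)

/-- `Ŷ_A(z)` for the pair `(z,z')`: weighted mean of treatment `z` over blocks assigned
both `z` and `z'`. -/
def YhatA (a : D.Assign) (z z' : Fin T) : ℝ :=
  (∑ k, if z ∈ a.1 k ∧ z' ∈ a.1 k then (D.K : ℝ) * D.w k * D.Yhatk a k z else 0) /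
    (D.lcount z z' : ℝ)

/-- Sample between-block heterogeneity `s_HT²(τ(z,z'))`. -/
def sHT2tau (a : D.Assign) (z z' : Fin T) : ℝ :=
  (∑ k, if z ∈ a.1 k ∧ z' ∈ a.1 k then
      ((D.K : ℝ) * D.w k * (D.Yhatk a k z - D.Yhatk a k z') -
        (D.YhatA a z z' - D.YhatA a z' z)) ^ 2
    else 0) / ((D.lcount z z' : ℝ) - 1)

/-- Sample between-block variance `s_Haj²(z)`. -/
def sHaj2 (a : D.Assign) (z : Fin T) : ℝ :=
  (∑ k, if z ∈ a.1 k then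
      ((D.K : ℝ) * D.w k) ^ 2 * (D.Yhatk a k z - D.YhatHaj a z) ^ 2
    else 0) / ((D.Lcount z : ℝ) - 1)

/-- `Ŷ_{A'}(z)` for the pair `(z,z')`. -/
def YhatA' (a : D.Assign) (z z' : Fin T) : ℝ :=
  (∑ k, if z ∈ a.1 k ∧ z' ∈ a.1 k then D.w k * D.Yhatk a k z else 0) /
    (∑ k, if z ∈ a.1 k ∧ z' ∈ a.1 k then D.w k else 0)

/-- Sample between-block heterogeneity `s_Haj²(τ(z,z'))`. -/
def sHaj2tau (a : D.Assign) (z z' : Fin T) : ℝ :=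
  (∑ k, if z ∈ a.1 k ∧ z' ∈ a.1 k then
      ((D.K : ℝ) * D.w k) ^ 2 * (D.Yhatk a k z - D.Yhatk a k z' -
        (D.YhatA' a z z' - D.YhatA' a z' z)) ^ 2
    else 0) / ((D.lcount z z' : ℝ) - 1)

/-- Between-block covariance estimator `Ŝ_HT^{bb}(z,z')`. -/
def ShatHTbb (a : D.Assign) (z z' : Fin T) : ℝ :=
  if 2 ≤ D.lcount z z' then
    ((D.lcount z z' : ℝ) / (2 * (D.Lcount z : ℝ) * (D.Lcount z' : ℝ))) *
      (D.sHT2 a z + D.sHT2 a z' - D.sHT2tau a z z')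
  else 0

/-- Between-block covariance estimator `Ŝ_Haj^{bb}(z,z')`. -/
def ShatHajbb (a : D.Assign) (z z' : Fin T) : ℝ :=
  if 2 ≤ D.lcount z z' then
    ((D.lcount z z' : ℝ) / (2 * (D.Lcount z : ℝ) * (D.Lcount z' : ℝ))) *
      (D.sHaj2 a z + D.sHaj2 a z' - D.sHaj2tau a z z')
  else 0

/-- Within-block covariance estimator `Ŝ_HT^{wb}(z,z')`. -/
def ShatHTwb (a : D.Assign) (z z' : Fin T) : ℝ :=
  (if 2 ≤ D.lcount z z' then
    (1 - (D.Lcount z : ℝ) * (D.Lcount z' : ℝ) / ((D.K : ℝ) * (D.lcount z z' : ℝ))) *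
      D.ShatHTbb a z z'
   else 0) +
  (if z = z' then
    (1 / D.p z) * ((1 / (D.K : ℝ) ^ 2) * ∑ k,
      if z ∈ a.1 k then ((D.K : ℝ) * D.w k) ^ 2 * D.sk2 a k z * (D.t : ℝ) / (D.n k : ℝ) else 0)
   else 0)

/-- Within-block covariance estimator `Ŝ_Haj^{wb}(z,z')`. -/
def ShatHajwb (a : D.Assign) (z z' : Fin T) : ℝ :=
  (if 2 ≤ D.lcount z z' then
    (1 - (D.Lcount z : ℝ) * (D.Lcount z' : ℝ) / ((D.K : ℝ) * (D.lcount z z' : ℝ))) *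
      D.ShatHajbb a z z'
   else 0) +
  (if z = z' then
    (1 / D.p z) * ((1 / (D.K : ℝ) ^ 2) * ∑ k,
      if z ∈ a.1 k then ((D.K : ℝ) * D.w k) ^ 2 * D.sk2 a k z * (D.t : ℝ) / (D.n k : ℝ) else 0)
   else 0)

/-- `μ(z) = Σ_k w_k 1[z∈R_k] Ȳ_k(z) / p_z`. -/
def muHT (a : D.Assign) (z : Fin T) : ℝ :=
  ∑ k, D.w k * (if z ∈ a.1 k then D.Ybar k z else 0) / D.p z

/-- `δ_k(z) = (w_k 1[z∈R_k]/p_z)(Ŷ_k(z) − Ȳ_k(z))`. -/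
def deltak (a : D.Assign) (k : Fin D.K) (z : Fin T) : ℝ :=
  D.w k * (if z ∈ a.1 k then (1 : ℝ) else 0) / D.p z * (D.Yhatk a k z - D.Ybar k z)

/-- `γ̄² = K⁻¹ Σ_k (K w_k)²`. -/
def gambar2 : ℝ := (1 / (D.K : ℝ)) * ∑ k, ((D.K : ℝ) * D.w k) ^ 2

/-- `K⁻¹ Σ_k (K w_k)² Ȳ_k(z)`. -/
def gamYbar (z : Fin T) : ℝ := (1 / (D.K : ℝ)) * ∑ k, ((D.K : ℝ) * D.w k) ^ 2 * D.Ybar k z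

end IBD
/-- Assumption 1 of the paper, for a sequence of designs indexed along `K → ∞`. -/
def Assumption1 {T : ℕ} (D : ℕ → IBD T) (t0 W0 : ℕ)
    (pinf : Fin T → ℝ) (qinf : Fin T → Fin T → ℝ) : Prop :=
  -- the number of blocks tends to infinity
  Tendsto (fun m => ((D m).K : ℝ)) atTop atTop ∧
  -- (i) T is fixed (by the type), t is fixed, and |𝒲| is fixed
  (∀ m, (D m).t = t0) ∧
  (∀ m, (Finset.univ.filter (fun ω : Finset (Fin T) => (D m).r ω ≠ 0)).card = W0) ∧
  -- (ii) K⁻¹ Σ (K w_k)² has a finite limit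
  (∃ C, Tendsto (fun m => (1 / ((D m).K : ℝ)) * ∑ k, (((D m).K : ℝ) * (D m).w k) ^ 2)
    atTop (𝓝 C)) ∧
  -- (iii) p_z → p∞_z ∈ (0,1), q_{z,z'} → q∞_{z,z'} ∈ [0,1)
  (∀ z, Tendsto (fun m => (D m).p z) atTop (𝓝 (pinf z)) ∧ 0 < pinf z ∧ pinf z < 1) ∧
  (∀ z z', Tendsto (fun m => (D m).q z z') atTop (𝓝 (qinf z z')) ∧
    0 ≤ qinf z z' ∧ qinf z z' < 1) ∧
  -- (iv) Ȳ_w and the between-block variances have finite limits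
  (∀ z, ∃ C, Tendsto (fun m => (D m).Ybarw z) atTop (𝓝 C)) ∧
  (∀ z, ∃ C, Tendsto (fun m => (D m).SHT2 z) atTop (𝓝 C)) ∧
  (∀ z z', ∃ C, Tendsto (fun m => (D m).SHT2tau z z') atTop (𝓝 C)) ∧
  (∀ z, ∃ C, Tendsto (fun m => (D m).SHaj2 z) atTop (𝓝 C)) ∧
  (∀ z z', ∃ C, Tendsto (fun m => (D m).SHaj2tau z z') atTop (𝓝 C)) ∧
  -- (v) weighted averages of within-block variances have finite limits
  (∀ z, ∃ C, Tendsto (fun m => (1 / ((D m).K : ℝ)) *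
    ∑ k, (((D m).K : ℝ) * (D m).w k) ^ 2 * (D m).Sk2 k z / ((D m).n k : ℝ))
      atTop (𝓝 C)) ∧
  (∀ z z', ∃ C, Tendsto (fun m => (1 / ((D m).K : ℝ)) *
    ∑ k, (((D m).K : ℝ) * (D m).w k) ^ 2 * (D m).Sk2tau k z z' / ((D m).n k : ℝ))
      atTop (𝓝 C)) ∧
  -- (vi) max_k K⁻¹ (K w_k Ȳ_k(z) − Ȳ(z;w))² → 0
  (∀ z, ∀ ε : ℝ, 0 < ε → ∃ M, ∀ m ≥ M, ∀ k : Fin (D m).K,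
    (1 / ((D m).K : ℝ)) * (((D m).K : ℝ) * (D m).w k * (D m).Ybar k z - (D m).Ybarw z) ^ 2
      < ε) ∧
  -- (vii) fourth-moment condition
  (∀ z, Tendsto (fun m => (((D m).K : ℝ)) ^ 2 *
    ∑ k, ((D m).w k) ^ 4 * (1 / ((D m).n k : ℝ)) * ∑ i ∈ (D m).blk k, (D m).Y i z ^ 4)
      atTop (𝓝 0))

/-- A sequence of random variables on the designs' assignment spaces converges
in probability to the (deterministic) sequence `c`. -/
def TendstoP {T : ℕ} (D : ℕ → IBD T) (X : ∀ m, (D m).Assign → ℝ) (c : ℕ → ℝ) : Prop :=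
  ∀ ε : ℝ, 0 < ε →
    Tendsto (fun m => fpr (D m).Omega (fun a => ε < |X m a - c m|)) atTop (𝓝 0)

/-- `ν` is the centered multivariate Gaussian distribution on `Fin T → ℝ` with covariance
matrix `S`: every linear functional of it is a centered real Gaussian with the induced
variance. -/
def IsGaussianVec {T : ℕ} (ν : Measure (Fin T → ℝ)) (S : Fin T → Fin T → ℝ) : Prop :=
  ∀ c : Fin T → ℝ,
    ν.map (fun x => ∑ z, c z * x z) =
      ProbabilityTheory.gaussianReal 0 (Real.toNNReal (∑ z, ∑ z', c z * S z z' * c z'))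

/-- A sequence of random vectors on the designs' assignment spaces converges in
distribution to the law `ν` (tested against bounded continuous functions). -/
def TendstoD {T : ℕ} (D : ℕ → IBD T) (X : ∀ m, (D m).Assign → (Fin T → ℝ))
    (ν : Measure (Fin T → ℝ)) : Prop :=
  ∀ f : BoundedContinuousFunction (Fin T → ℝ) ℝ,
    Tendsto (fun m => fexp (D m).Omega (fun a => f (X m a))) atTop (𝓝 (∫ x, f x ∂ν))

/-- A sequence of real random variables on the designs' assignment spaces converges in
distribution to the law `ν`. -/
def TendstoD1 {T : ℕ} (D : ℕ → IBD T) (X : ∀ m, (D m).Assign → ℝ) (ν : Measure ℝ) : Prop :=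
  ∀ f : BoundedContinuousFunction ℝ ℝ,
    Tendsto (fun m => fexp (D m).Omega (fun a => f (X m a))) atTop (𝓝 (∫ x, f x ∂ν))
namespace IBD

variable {T : ℕ} (D : IBD T)

/-- Block-level average `Ȳ(z) = K⁻¹ Σ_k Ȳ_k(z)`. -/
def Ybarb (z : Fin T) : ℝ := (∑ k, D.Ybar k z) / (D.K : ℝ)

/-- Between-block variance `S_bb²(z)` (equal block weights). -/
def Sbb2 (z : Fin T) : ℝ := (∑ k, (D.Ybar k z - D.Ybarb z) ^ 2) / ((D.K : ℝ) - 1)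

/-- Between-block heterogeneity `S_bb²(τ(z,z'))` (equal block weights). -/
def Sbb2tau (z z' : Fin T) : ℝ :=
  (∑ k, (D.Ybar k z - D.Ybar k z' - (D.Ybarb z - D.Ybarb z')) ^ 2) / ((D.K : ℝ) - 1)

/-- Adjusted observed block mean `Ŷ_k^{adj}(z)`. -/
def Yadjk (a : D.Assign) (k : Fin D.K) (z : Fin T) : ℝ :=
  if z ∈ a.1 k then
    D.Yhatk a k z - (1 / (D.t : ℝ)) * ∑ z' ∈ a.1 k, D.Yhatk a k z'
  else 0

/-- `Ŷ^{adj}(z) = Σ_k Ŷ_k^{adj}(z)`. -/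
def Yadj (a : D.Assign) (z : Fin T) : ℝ := ∑ k, D.Yadjk a k z

/-- The adjusted (block-effect corrected) estimator `τ̂^{BIBD-adj}(z₁,z₂)`. -/
def tauadj (a : D.Assign) (z1 z2 : Fin T) : ℝ :=
  ((D.t : ℝ) / ((D.lcount z1 z2 : ℝ) * (T : ℝ))) * (D.Yadj a z1 - D.Yadj a z2)

/-- `𝒲_{z̃}`: the treatment subsets of the design containing `z1` but not `z2`. -/
def Wsets (z1 z2 : Fin T) : Finset (Finset (Fin T)) :=
  Finset.univ.filter (fun ω : Finset (Fin T) => D.r ω ≠ 0 ∧ z1 ∈ ω ∧ z2 ∉ ω)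

/-- `S_k²(τ(z̃,ω))`. -/
def Sk2tauSet (k : Fin D.K) (zt : Fin T) (ω : Finset (Fin T)) : ℝ :=
  (∑ i ∈ D.blk k,
      (D.Y i zt - (1 / ((D.t : ℝ) - 1)) * (∑ z ∈ ω.erase zt, D.Y i z) -
        (D.Ybar k zt - (1 / ((D.t : ℝ) - 1)) * (∑ z ∈ ω.erase zt, D.Ybar k z))) ^ 2) /
    ((D.n k : ℝ) - 1)

/-- `S_bb²(τ(z̃,ω))`. -/
def Sbb2tauSet (zt : Fin T) (ω : Finset (Fin T)) : ℝ :=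
  (∑ k,
      (D.Ybar k zt - (1 / ((D.t : ℝ) - 1)) * (∑ z ∈ ω.erase zt, D.Ybar k z) -
        (D.Ybarb zt - (1 / ((D.t : ℝ) - 1)) * (∑ z ∈ ω.erase zt, D.Ybarb z))) ^ 2) /
    ((D.K : ℝ) - 1)

/-- `S̄_k²(𝒲_{z̃})`. -/
def SbarkW (k : Fin D.K) (z1 z2 : Fin T) : ℝ :=
  (1 / ((D.Wsets z1 z2).card : ℝ)) *
    ∑ ω ∈ D.Wsets z1 z2, ∑ z ∈ ω.erase z1, (1 / ((D.t : ℝ) - 1)) * D.Sk2 k z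

/-- `S̄_k²(τ(z̃,𝒲_{z̃}))`. -/
def SbarktauW (k : Fin D.K) (z1 z2 : Fin T) : ℝ :=
  (1 / ((D.Wsets z1 z2).card : ℝ)) * ∑ ω ∈ D.Wsets z1 z2, D.Sk2tauSet k z1 ω

/-- `S̄_bb²(τ(z̃,𝒲_{z̃}))`. -/
def SbarbbtauW (z1 z2 : Fin T) : ℝ :=
  (1 / ((D.Wsets z1 z2).card : ℝ)) * ∑ ω ∈ D.Wsets z1 z2, D.Sbb2tauSet z1 ω

/-- `V̄_k(z̃)`. -/
def Vbark (k : Fin D.K) (z1 z2 : Fin T) : ℝ :=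
  (D.t : ℝ) * D.Sk2 k z1 / (D.n k : ℝ) +
    (1 / ((D.t : ℝ) - 1)) * ((D.t : ℝ) * D.SbarkW k z1 z2 / (D.n k : ℝ)) -
    D.SbarktauW k z1 z2 / (D.n k : ℝ)

/-- `V_k(z₁,z₂)`. -/
def Vk (k : Fin D.K) (z1 z2 : Fin T) : ℝ :=
  (D.t : ℝ) * D.Sk2 k z1 / (D.n k : ℝ) + (D.t : ℝ) * D.Sk2 k z2 / (D.n k : ℝ) -
    D.Sk2tau k z1 z2 / (D.n k : ℝ)

/-- Conditional inclusion probability `p(z) = P(z∈R_k | z₁∈R_k, z₂∉R_k)`. -/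
def pcond (z1 z2 z : Fin T) : ℝ :=
  ((∑ ω ∈ Finset.univ.filter
      (fun ω : Finset (Fin T) => z1 ∈ ω ∧ z2 ∉ ω ∧ z ∈ ω), D.r ω : ℕ) : ℝ) /
    ((D.Lcount z1 : ℝ) - (D.lcount z1 z2 : ℝ))

/-- Conditional pairwise inclusion probability `p_{z̃}(z,z')`. -/
def pcond2 (z1 z2 z z' : Fin T) : ℝ :=
  ((∑ ω ∈ Finset.univ.filter
      (fun ω : Finset (Fin T) => z1 ∈ ω ∧ z2 ∉ ω ∧ z ∈ ω ∧ z' ∈ ω), D.r ω : ℕ) : ℝ) /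
    ((D.Lcount z1 : ℝ) - (D.lcount z1 z2 : ℝ))

/-- Unweighted `Ŷ_A(z)` for the pair `(z,z')` (equal block weights `1/K`). -/
def YhatAu (a : D.Assign) (z z' : Fin T) : ℝ :=
  (∑ k, if z ∈ a.1 k ∧ z' ∈ a.1 k then D.Yhatk a k z else 0) / (D.lcount z z' : ℝ)

/-- Sample between-block heterogeneity `s_bb²(τ(z,z'))` (equal block weights). -/
def sbb2tau (a : D.Assign) (z z' : Fin T) : ℝ :=
  (∑ k, if z ∈ a.1 k ∧ z' ∈ a.1 k then
      (D.Yhatk a k z - D.Yhatk a k z' - (D.YhatAu a z z' - D.YhatAu a z' z)) ^ 2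
    else 0) / ((D.lcount z z' : ℝ) - 1)

/-- `s̄_bb²(τ(z̃,𝒲_{z̃}))`. -/
def sbarbb (a : D.Assign) (z1 z2 : Fin T) : ℝ :=
  (∑ z ∈ ({z1, z2} : Finset (Fin T))ᶜ,
      (D.pcond z1 z2 z / ((D.t : ℝ) - 1)) * D.sbb2tau a z1 z) -
  (∑ z ∈ ({z1, z2} : Finset (Fin T))ᶜ, ∑ z' ∈ ({z1, z2} : Finset (Fin T))ᶜ,
      if z ≠ z' then (D.pcond2 z1 z2 z z' / (2 * ((D.t : ℝ) - 1) ^ 2)) * D.sbb2tau a z z'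
      else 0)

/-- `σ̃²_bb(z₁,z₂)`. -/
def sigtilde (a : D.Assign) (z1 z2 : Fin T) : ℝ :=
  (1 / (D.K : ℝ)) * (D.sbb2tau a z1 z2 + ((T : ℝ) - 1) * (((D.t : ℝ) - 1) / (D.t : ℝ)) *
    (D.sbarbb a z1 z2 + D.sbarbb a z2 z1))

/-- Variance estimator `σ̂²_{adj-wb}(z₁,z₂)`. -/
def sigadjwb (a : D.Assign) (z1 z2 : Fin T) : ℝ :=
  (((T : ℝ) - (D.t : ℝ)) / ((T : ℝ) * ((D.t : ℝ) - 1))) * D.sigtilde a z1 z2 +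
    (1 / (D.K : ℝ) ^ 2) * ∑ k, (D.sk2 a k z1 + D.sk2 a k z2) * (T : ℝ) / (D.n k : ℝ)

/-- Variance estimator `σ̂²_{adj-bb}(z₁,z₂)`. -/
def sigadjbb (a : D.Assign) (z1 z2 : Fin T) : ℝ :=
  (((T : ℝ) - (D.t : ℝ)) / ((T : ℝ) * ((D.t : ℝ) - 1))) * D.sigtilde a z1 z2 +
    D.sbb2tau a z1 z2 / (D.K : ℝ)

end IBD
section RandomBlocking

/-- All ways to partition the `N` units into `K` blocks of prescribed sizes `nsz`. -/
def PartOmega (K N : ℕ) (nsz : Fin K → ℕ) : Finset (Fin N → Fin K) :=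
  Finset.univ.filter (fun B => ∀ k, (Finset.univ.filter (fun i => B i = k)).card = nsz k)

/-- Block mean under the blocking `B`. -/
def rbYbar {K N : ℕ} (nsz : Fin K → ℕ) (B : Fin N → Fin K) (Y : Fin N → ℝ) (k : Fin K) : ℝ :=
  (∑ i ∈ Finset.univ.filter (fun i => B i = k), Y i) / (nsz k : ℝ)

/-- Within-block variance `S_k²` under the blocking `B`. -/
def rbSk2 {K N : ℕ} (nsz : Fin K → ℕ) (B : Fin N → Fin K) (Y : Fin N → ℝ) (k : Fin K) : ℝ :=
  (∑ i ∈ Finset.univ.filter (fun i => B i = k), (Y i - rbYbar nsz B Y k) ^ 2) /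
    ((nsz k : ℝ) - 1)

/-- Block-level average `Ỹ` under the blocking `B`. -/
def rbYtilde {K N : ℕ} (nsz : Fin K → ℕ) (B : Fin N → Fin K) (Y : Fin N → ℝ) : ℝ :=
  (∑ k, rbYbar nsz B Y k) / (K : ℝ)

/-- Between-block variance `S_bb²` under the blocking `B`. -/
def rbSbb2 {K N : ℕ} (nsz : Fin K → ℕ) (B : Fin N → Fin K) (Y : Fin N → ℝ) : ℝ :=
  (∑ k, (rbYbar nsz B Y k - rbYtilde nsz B Y) ^ 2) / ((K : ℝ) - 1)

/-- Population variance `S²`. -/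
def popVar (N : ℕ) (Y : Fin N → ℝ) : ℝ :=
  (∑ i, (Y i - (∑ j, Y j) / (N : ℝ)) ^ 2) / ((N : ℝ) - 1)

end RandomBlocking
section Aux

namespace IBDThm

variable {T : ℕ} (D : IBD T)

/-- Precomposition with a permutation, as an equivalence on functions. -/
def pce {ι κ : Type*} (σ : Equiv.Perm ι) : (ι → κ) ≃ (ι → κ) where
  toFun Z := Z ∘ σ
  invFun Z := Z ∘ σ.symm
  left_inv Z := by funext i; simp
  right_inv Z := by funext i; simp

lemma sum_comp_perm {α β : Type*} [AddCommMonoid β] (s : Finset α) (e : Equiv.Perm α)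
    (hs : ∀ x, x ∈ s ↔ e x ∈ s) (F : α → β) :
    ∑ x ∈ s, F (e x) = ∑ x ∈ s, F x :=
  Finset.sum_equiv e hs (fun i _ => (rfl : F (e i) = F (e i)))

/-- The stage-1 sample space. -/
def V : Finset (Fin D.K → Finset (Fin T)) := Finset.univ.filter D.ValidR

/-- The stage-2 sample space given a stage-1 assignment. -/
def ZS (R : Fin D.K → Finset (Fin T)) : Finset (Fin D.N → Fin T) :=
  Finset.univ.filter (D.ValidZ R)

lemma mem_V {R} : R ∈ V D ↔ D.ValidR R := by simp [V]

lemma mem_ZS {R Z} : Z ∈ ZS D R ↔ D.ValidZ R Z := by simp [ZS]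

lemma sum_Omega (f : D.Assign → ℝ) :
    ∑ a ∈ D.Omega, f a = ∑ R ∈ V D, ∑ Z ∈ ZS D R, f (R, Z) := by
  rw [IBD.Omega, Finset.sum_filter, ← Finset.univ_product_univ, Finset.sum_product]
  rw [V, Finset.sum_filter]
  refine Finset.sum_congr rfl fun R _ => ?_
  by_cases h : D.ValidR R
  · simp only [h, true_and, if_true, ZS, Finset.sum_filter]
  · simp [h]

lemma card_Omega : D.Omega.card = ∑ R ∈ V D, (ZS D R).card := by
  have := sum_Omega D (fun _ => (1 : ℝ))
  simp only [Finset.sum_const, nsmul_eq_mul, mul_one] at this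
  exact_mod_cast this

lemma mem_blk {i : Fin D.N} {k} : i ∈ D.blk k ↔ D.b i = k := by simp [IBD.blk]

lemma b_symm (σ : Equiv.Perm (Fin D.N)) (hσ : ∀ i, D.b (σ i) = D.b i) :
    ∀ i, D.b (σ.symm i) = D.b i := by
  intro i
  conv_rhs => rw [← σ.apply_symm_apply i, hσ]

lemma swap_b {i j : Fin D.N} (hij : D.b i = D.b j) :
    ∀ x, D.b (Equiv.swap i j x) = D.b x := by
  intro x
  rcases eq_or_ne x i with h | h
  · subst h; rw [Equiv.swap_apply_left, ← hij]
  rcases eq_or_ne x j with h' | h'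
  · subst h'; rw [Equiv.swap_apply_right, hij]
  · rw [Equiv.swap_apply_of_ne_of_ne h h']

lemma validZ_comp {R Z} (σ : Equiv.Perm (Fin D.N)) (hσ : ∀ i, D.b (σ i) = D.b i)
    (hZ : D.ValidZ R Z) : D.ValidZ R (Z ∘ σ) := by
  refine ⟨fun i => ?_, fun k z hz => ?_⟩
  · have := hZ.1 (σ i)
    rwa [hσ i] at this
  · rw [← hZ.2 k z hz]
    apply Finset.card_bij' (fun i _ => σ i) (fun j _ => σ.symm j)
    · intro a ha
      simp only [Finset.mem_filter, mem_blk, Function.comp_apply] at ha ⊢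
      exact ⟨by rw [hσ]; exact ha.1, ha.2⟩
    · intro a ha
      simp only [Finset.mem_filter, mem_blk, Function.comp_apply] at ha ⊢
      exact ⟨by rw [b_symm D σ hσ]; exact ha.1, by rw [σ.apply_symm_apply]; exact ha.2⟩
    · intro a _; exact σ.symm_apply_apply a
    · intro a _; exact σ.apply_symm_apply a

lemma mem_ZS_comp {R Z} (σ : Equiv.Perm (Fin D.N)) (hσ : ∀ i, D.b (σ i) = D.b i) :
    Z ∘ σ ∈ ZS D R ↔ Z ∈ ZS D R := by
  simp only [mem_ZS]
  constructor
  · intro h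
    have := validZ_comp D σ.symm (b_symm D σ hσ) h
    have hZ : (Z ∘ σ) ∘ σ.symm = Z := by funext i; simp
    rwa [hZ] at this
  · exact validZ_comp D σ hσ

lemma sum_ZS_comp {β : Type*} [AddCommMonoid β] (R) (σ : Equiv.Perm (Fin D.N))
    (hσ : ∀ i, D.b (σ i) = D.b i) (F : (Fin D.N → Fin T) → β) :
    ∑ Z ∈ ZS D R, F (Z ∘ σ) = ∑ Z ∈ ZS D R, F Z :=
  sum_comp_perm (ZS D R) (pce σ) (fun Z => (mem_ZS_comp D σ hσ).symm) F

lemma validR_comp {R} (π : Equiv.Perm (Fin D.K)) (h : D.ValidR R) : D.ValidR (R ∘ π) := by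
  intro ω
  rw [← h ω]
  apply Finset.card_bij' (fun k _ => π k) (fun k _ => π.symm k)
  · intro a ha
    simp only [Finset.mem_filter, Finset.mem_univ, true_and, Function.comp_apply] at ha ⊢
    exact ha
  · intro a ha
    simp only [Finset.mem_filter, Finset.mem_univ, true_and, Function.comp_apply] at ha ⊢
    rwa [π.apply_symm_apply]
  · intro a _; exact π.symm_apply_apply a
  · intro a _; exact π.apply_symm_apply a

lemma mem_V_comp {R} (π : Equiv.Perm (Fin D.K)) : R ∘ π ∈ V D ↔ R ∈ V D := by
  simp only [mem_V]
  constructor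
  · intro h
    have := validR_comp D π.symm h
    have hR : (R ∘ π) ∘ π.symm = R := by funext k; simp
    rwa [hR] at this
  · exact validR_comp D π

lemma sum_V_comp {β : Type*} [AddCommMonoid β] (π : Equiv.Perm (Fin D.K))
    (F : (Fin D.K → Finset (Fin T)) → β) :
    ∑ R ∈ V D, F (R ∘ π) = ∑ R ∈ V D, F R :=
  sum_comp_perm (V D) (pce π) (fun R => (mem_V_comp D π).symm) F

lemma pair_const {α : Type*} {s : Finset α} (S : α → α → ℕ)
    (hab : ∀ i ∈ s, ∀ j ∈ s, ∀ j' ∈ s, j ≠ i → j' ≠ i → S i j = S i j')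
    (hba : ∀ i ∈ s, ∀ i' ∈ s, ∀ j ∈ s, i ≠ j → i' ≠ j → S i j = S i' j)
    (hsym : ∀ i ∈ s, ∀ j ∈ s, i ≠ j → S i j = S j i) :
    ∀ i ∈ s, ∀ j ∈ s, ∀ i' ∈ s, ∀ j' ∈ s, i ≠ j → i' ≠ j' → S i j = S i' j' := by
  intro i hi j hj i' hi' j' hj' hij hij'
  by_cases h1 : i = j'
  · by_cases h2 : j = i'
    · subst h1; subst h2
      exact (hsym _ hi' _ hj' hij').symm
    · calc S i j = S i' j := hba _ hi _ hi' _ hj hij (Ne.symm h2)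
        _ = S i' j' := hab _ hi' _ hj _ hj' h2 (Ne.symm hij')
  · calc S i j = S i j' := hab _ hi _ hj _ hj' (Ne.symm hij) (Ne.symm h1)
      _ = S i' j' := hba _ hi _ hi' _ hj' h1 hij'

/-- Number of stage-2 assignments with `Z i = z`. -/
def c1 (R : Fin D.K → Finset (Fin T)) (i : Fin D.N) (z : Fin T) : ℕ :=
  ((ZS D R).filter (fun Z => Z i = z)).card

/-- Number of stage-2 assignments with `Z i = z` and `Z j = z'`. -/
def c2 (R : Fin D.K → Finset (Fin T)) (i j : Fin D.N) (z z' : Fin T) : ℕ :=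
  ((ZS D R).filter (fun Z => Z i = z ∧ Z j = z')).card

lemma c1_eq_sum (R) (i) (z) :
    c1 D R i z = ∑ Z ∈ ZS D R, if Z i = z then 1 else 0 := Finset.card_filter _ _

lemma c2_eq_sum (R) (i j) (z z') :
    c2 D R i j z z' =
      ∑ Z ∈ ZS D R, (if Z i = z then 1 else 0) * (if Z j = z' then 1 else 0) := by
  rw [c2, Finset.card_filter]
  refine Finset.sum_congr rfl fun Z _ => ?_
  by_cases h1 : Z i = z <;> by_cases h2 : Z j = z' <;> simp [h1, h2]

lemma perZ_single {R Z} (hZ : Z ∈ ZS D R) {k z} (hz : z ∈ R k) :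
    ∑ i ∈ D.blk k, (if Z i = z then 1 else 0) = D.n k / D.t := by
  rw [← Finset.card_filter]
  exact ((mem_ZS D).mp hZ).2 k z hz

lemma perZ_diag {R Z} (hZ : Z ∈ ZS D R) {k z z'} (hz : z ∈ R k) :
    ∑ i ∈ D.blk k, (if Z i = z then 1 else 0) * (if Z i = z' then 1 else 0)
      = if z = z' then D.n k / D.t else 0 := by
  by_cases h : z = z'
  · subst h
    rw [if_pos rfl, ← perZ_single D hZ hz]
    refine Finset.sum_congr rfl fun i _ => ?_
    by_cases h1 : Z i = z <;> simp [h1]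
  · rw [if_neg h]
    refine Finset.sum_eq_zero fun i _ => ?_
    by_cases h1 : Z i = z
    · simp [h1, h]
    · simp [h1]

lemma c1_zero {R} {i : Fin D.N} {k z} (hi : D.b i = k) (hz : z ∉ R k) : c1 D R i z = 0 := by
  rw [c1, Finset.card_eq_zero, Finset.filter_eq_empty_iff]
  intro Z hZ h
  have h1 := ((mem_ZS D).mp hZ).1 i
  rw [h, hi] at h1
  exact hz h1

lemma c1_const {R} {i i' : Fin D.N} {k z} (hi : D.b i = k) (hi' : D.b i' = k) :
    c1 D R i z = c1 D R i' z := by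
  have hσ := swap_b D (hi.trans hi'.symm)
  have h := sum_ZS_comp D R (Equiv.swap i i') hσ
    (fun Z => if Z i = z then (1 : ℕ) else 0)
  simp only [Function.comp_apply, Equiv.swap_apply_left] at h
  rw [c1_eq_sum, c1_eq_sum, ← h]

lemma c1_value {R k z} (hz : z ∈ R k) {i} (hi : D.b i = k) :
    D.t * c1 D R i z = (ZS D R).card := by
  have h1 : ∑ i' ∈ D.blk k, c1 D R i' z = D.n k * c1 D R i z := by
    rw [Finset.sum_congr rfl (fun i' hi' => c1_const D (mem_blk D |>.mp hi') hi),
      Finset.sum_const, smul_eq_mul]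
    rfl
  have h2 : ∑ i' ∈ D.blk k, c1 D R i' z = (ZS D R).card * (D.n k / D.t) := by
    calc ∑ i' ∈ D.blk k, c1 D R i' z
        = ∑ i' ∈ D.blk k, ∑ Z ∈ ZS D R, if Z i' = z then 1 else 0 := by
          refine Finset.sum_congr rfl fun i' _ => c1_eq_sum D R i' z
      _ = ∑ Z ∈ ZS D R, ∑ i' ∈ D.blk k, if Z i' = z then 1 else 0 := Finset.sum_comm
      _ = ∑ Z ∈ ZS D R, (D.n k / D.t) := by
          refine Finset.sum_congr rfl fun Z hZ => perZ_single D hZ hz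
      _ = (ZS D R).card * (D.n k / D.t) := by rw [Finset.sum_const, smul_eq_mul]
  have h12 : D.n k * c1 D R i z = (ZS D R).card * (D.n k / D.t) := h1.symm.trans h2
  have ht : D.n k / D.t * D.t = D.n k := Nat.div_mul_cancel (D.hdvd k)
  refine Nat.eq_of_mul_eq_mul_left (D.hnpos k) ?_
  calc D.n k * (D.t * c1 D R i z) = D.t * (D.n k * c1 D R i z) := by ring
    _ = D.t * ((ZS D R).card * (D.n k / D.t)) := by rw [h12]
    _ = (ZS D R).card * (D.n k / D.t * D.t) := by ring
    _ = D.n k * (ZS D R).card := by rw [ht]; ring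

lemma c2_zero_left {R} {i j : Fin D.N} {k z z'} (hi : D.b i = k) (hz : z ∉ R k) :
    c2 D R i j z z' = 0 := by
  rw [c2, Finset.card_eq_zero, Finset.filter_eq_empty_iff]
  intro Z hZ h
  have h1 := ((mem_ZS D).mp hZ).1 i
  rw [h.1, hi] at h1
  exact hz h1

lemma c2_zero_right {R} {i j : Fin D.N} {k z z'} (hj : D.b j = k) (hz' : z' ∉ R k) :
    c2 D R i j z z' = 0 := by
  rw [c2, Finset.card_eq_zero, Finset.filter_eq_empty_iff]
  intro Z hZ h
  have h1 := ((mem_ZS D).mp hZ).1 j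
  rw [h.2, hj] at h1
  exact hz' h1

lemma c2_diag (R) (i) {z z' : Fin T} (h : z = z') : c2 D R i i z z' = c1 D R i z := by
  subst h; simp [c2, c1]

lemma c2_diag_ne (R) (i) {z z' : Fin T} (h : z ≠ z') : c2 D R i i z z' = 0 := by
  rw [c2, Finset.card_eq_zero, Finset.filter_eq_empty_iff]
  intro Z _ hh
  exact h (hh.1 ▸ hh.2 ▸ rfl)

lemma c2_swap_a {R} {i j j' : Fin D.N} {k z z'} (hj : D.b j = k) (hj' : D.b j' = k)
    (hji : j ≠ i) (hj'i : j' ≠ i) : c2 D R i j z z' = c2 D R i j' z z' := by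
  rcases eq_or_ne j j' with h | h
  · rw [h]
  have hσ := swap_b D (hj.trans hj'.symm)
  have hcomp := sum_ZS_comp D R (Equiv.swap j j') hσ
    (fun Z => (if Z i = z then (1 : ℕ) else 0) * (if Z j' = z' then 1 else 0))
  have hfix : ∀ Z : Fin D.N → Fin T, Z (Equiv.swap j j' i) = Z i := fun Z => by
    rw [Equiv.swap_apply_of_ne_of_ne (Ne.symm hji) (Ne.symm hj'i)]
  simp only [Function.comp_apply, Equiv.swap_apply_right, hfix] at hcomp
  rw [c2_eq_sum, c2_eq_sum, ← hcomp]

lemma c2_swap_b {R} {i i' j : Fin D.N} {k z z'} (hi : D.b i = k) (hi' : D.b i' = k)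
    (hij : i ≠ j) (hi'j : i' ≠ j) : c2 D R i j z z' = c2 D R i' j z z' := by
  rcases eq_or_ne i i' with h | h
  · rw [h]
  have hσ := swap_b D (hi.trans hi'.symm)
  have hcomp := sum_ZS_comp D R (Equiv.swap i i') hσ
    (fun Z => (if Z i' = z then (1 : ℕ) else 0) * (if Z j = z' then 1 else 0))
  have hfix : ∀ Z : Fin D.N → Fin T, Z (Equiv.swap i i' j) = Z j := fun Z => by
    rw [Equiv.swap_apply_of_ne_of_ne (Ne.symm hij) (Ne.symm hi'j)]
  simp only [Function.comp_apply, Equiv.swap_apply_right, hfix] at hcomp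
  rw [c2_eq_sum, c2_eq_sum, ← hcomp]

lemma c2_swap_c {R} {i j : Fin D.N} (hb : D.b i = D.b j) (hij : i ≠ j) {z z' : Fin T} :
    c2 D R i j z z' = c2 D R j i z z' := by
  have hσ := swap_b D hb
  have hcomp := sum_ZS_comp D R (Equiv.swap i j) hσ
    (fun Z => (if Z i = z then (1 : ℕ) else 0) * (if Z j = z' then 1 else 0))
  simp only [Function.comp_apply, Equiv.swap_apply_left, Equiv.swap_apply_right] at hcomp
  rw [c2_eq_sum, c2_eq_sum, ← hcomp]

lemma c2_const_same {R k} {i j : Fin D.N} (hi : D.b i = k) (hj : D.b j = k) (hij : i ≠ j)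
    {z z' : Fin T} :
    ∀ i' ∈ D.blk k, ∀ j' ∈ D.blk k, i' ≠ j' → c2 D R i' j' z z' = c2 D R i j z z' := by
  intro i' hi' j' hj' hij'
  refine pair_const (s := D.blk k) (fun a b => c2 D R a b z z')
    (fun a _ b hb c hc hba hca =>
      c2_swap_a D (mem_blk D |>.mp hb) (mem_blk D |>.mp hc) hba hca)
    (fun a ha b hb c _ hac hbc =>
      c2_swap_b D (mem_blk D |>.mp ha) (mem_blk D |>.mp hb) hac hbc)
    (fun a ha b hb hab =>
      c2_swap_c D ((mem_blk D |>.mp ha).trans (mem_blk D |>.mp hb).symm) hab)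
    i' hi' j' hj' i (mem_blk D |>.mpr hi) j (mem_blk D |>.mpr hj) hij' hij

lemma c2_total_same {R k z z'} (hz : z ∈ R k) (hz' : z' ∈ R k) {i j : Fin D.N}
    (hi : D.b i = k) (hj : D.b j = k) (hij : i ≠ j) :
    D.n k * (D.n k - 1) * c2 D R i j z z'
      + (ZS D R).card * (if z = z' then D.n k / D.t else 0)
      = (ZS D R).card * ((D.n k / D.t) * (D.n k / D.t)) := by
  have hL : ∑ i' ∈ D.blk k, ∑ j' ∈ (D.blk k).erase i', c2 D R i' j' z z'
      = D.n k * (D.n k - 1) * c2 D R i j z z' := by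
    calc ∑ i' ∈ D.blk k, ∑ j' ∈ (D.blk k).erase i', c2 D R i' j' z z'
        = ∑ i' ∈ D.blk k, ∑ j' ∈ (D.blk k).erase i', c2 D R i j z z' := by
          refine Finset.sum_congr rfl fun i' hi' => Finset.sum_congr rfl fun j' hj' => ?_
          exact c2_const_same D hi hj hij i' hi' j' (Finset.mem_of_mem_erase hj')
            (Finset.ne_of_mem_erase hj').symm
      _ = D.n k * (D.n k - 1) * c2 D R i j z z' := by
          rw [Finset.sum_congr rfl (fun i' hi' => by
            rw [Finset.sum_const, Finset.card_erase_of_mem hi', smul_eq_mul])]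
          rw [Finset.sum_const, smul_eq_mul, ← mul_assoc]
          rfl
  have hR : ∑ i' ∈ D.blk k, ∑ j' ∈ (D.blk k).erase i', c2 D R i' j' z z'
      + (ZS D R).card * (if z = z' then D.n k / D.t else 0)
      = (ZS D R).card * ((D.n k / D.t) * (D.n k / D.t)) := by
    have key : ∀ Z ∈ ZS D R,
        (∑ i' ∈ D.blk k, ∑ j' ∈ (D.blk k).erase i',
          (if Z i' = z then 1 else 0) * (if Z j' = z' then 1 else 0))
        + (if z = z' then D.n k / D.t else 0)
        = (D.n k / D.t) * (D.n k / D.t) := by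
      intro Z hZ
      have hsplit : ∀ i' ∈ D.blk k,
          ∑ j' ∈ (D.blk k).erase i', (if Z i' = z then 1 else 0) * (if Z j' = z' then 1 else 0)
          + (if Z i' = z then 1 else 0) * (if Z i' = z' then 1 else 0)
          = ∑ j' ∈ D.blk k, (if Z i' = z then 1 else 0) * (if Z j' = z' then 1 else 0) := by
        intro i' hi'
        exact Finset.sum_erase_add _ _ hi'
      calc (∑ i' ∈ D.blk k, ∑ j' ∈ (D.blk k).erase i',
              (if Z i' = z then 1 else 0) * (if Z j' = z' then 1 else 0))
            + (if z = z' then D.n k / D.t else 0)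
          = ∑ i' ∈ D.blk k, (∑ j' ∈ (D.blk k).erase i',
              (if Z i' = z then 1 else 0) * (if Z j' = z' then 1 else 0)
              + (if Z i' = z then 1 else 0) * (if Z i' = z' then 1 else 0)) := by
            rw [Finset.sum_add_distrib, perZ_diag D hZ hz]
        _ = ∑ i' ∈ D.blk k, ∑ j' ∈ D.blk k,
              (if Z i' = z then 1 else 0) * (if Z j' = z' then 1 else 0) := by
            exact Finset.sum_congr rfl hsplit
        _ = (∑ i' ∈ D.blk k, if Z i' = z then 1 else 0)
              * (∑ j' ∈ D.blk k, if Z j' = z' then 1 else 0) := by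
            rw [Finset.sum_mul_sum]
        _ = (D.n k / D.t) * (D.n k / D.t) := by
            rw [perZ_single D hZ hz, perZ_single D hZ hz']
    calc ∑ i' ∈ D.blk k, ∑ j' ∈ (D.blk k).erase i', c2 D R i' j' z z'
          + (ZS D R).card * (if z = z' then D.n k / D.t else 0)
        = ∑ Z ∈ ZS D R, ((∑ i' ∈ D.blk k, ∑ j' ∈ (D.blk k).erase i',
            (if Z i' = z then 1 else 0) * (if Z j' = z' then 1 else 0))
            + (if z = z' then D.n k / D.t else 0)) := by
          rw [Finset.sum_add_distrib, Finset.sum_const, smul_eq_mul]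
          congr 1
          calc ∑ i' ∈ D.blk k, ∑ j' ∈ (D.blk k).erase i', c2 D R i' j' z z'
              = ∑ i' ∈ D.blk k, ∑ j' ∈ (D.blk k).erase i', ∑ Z ∈ ZS D R,
                  (if Z i' = z then 1 else 0) * (if Z j' = z' then 1 else 0) := by
                exact Finset.sum_congr rfl fun i' _ => Finset.sum_congr rfl fun j' _ =>
                  c2_eq_sum D R i' j' z z'
            _ = ∑ Z ∈ ZS D R, ∑ i' ∈ D.blk k, ∑ j' ∈ (D.blk k).erase i',
                  (if Z i' = z then 1 else 0) * (if Z j' = z' then 1 else 0) := by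
                rw [Finset.sum_comm]
                exact Finset.sum_congr rfl fun i' _ => Finset.sum_comm
      _ = ∑ Z ∈ ZS D R, (D.n k / D.t) * (D.n k / D.t) := Finset.sum_congr rfl key
      _ = (ZS D R).card * ((D.n k / D.t) * (D.n k / D.t)) := by
          rw [Finset.sum_const, smul_eq_mul]
  rw [← hL]
  exact hR

lemma c2_value_cross {R k k'} (hkk' : k ≠ k') {z z'} (hz : z ∈ R k) (hz' : z' ∈ R k')
    {i j : Fin D.N} (hi : D.b i = k) (hj : D.b j = k') :
    D.t * D.t * c2 D R i j z z' = (ZS D R).card := by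
  have hne : ∀ (a : Fin D.N), D.b a = k → ∀ (c : Fin D.N), D.b c = k' → a ≠ c := by
    intro a ha c hc h
    exact hkk' (ha ▸ h ▸ hc)
  have hconst : ∀ i' ∈ D.blk k, ∀ j' ∈ D.blk k', c2 D R i' j' z z' = c2 D R i j z z' := by
    intro i' hi' j' hj'
    have hi'k := mem_blk D |>.mp hi'
    have hj'k := mem_blk D |>.mp hj'
    calc c2 D R i' j' z z' = c2 D R i j' z z' :=
          c2_swap_b D hi'k hi (hne _ hi'k _ hj'k) (hne _ hi _ hj'k)
      _ = c2 D R i j z z' := c2_swap_a D hj'k hj (hne _ hi _ hj'k).symm (hne _ hi _ hj).symm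
  have htot : D.n k * D.n k' * c2 D R i j z z'
      = (ZS D R).card * ((D.n k / D.t) * (D.n k' / D.t)) := by
    have hinner : ∀ Z ∈ ZS D R,
        (∑ i' ∈ D.blk k, ∑ j' ∈ D.blk k',
          (if Z i' = z then 1 else 0) * (if Z j' = z' then 1 else 0))
        = (D.n k / D.t) * (D.n k' / D.t) := by
      intro Z hZ
      rw [← Finset.sum_mul_sum, perZ_single D hZ hz, perZ_single D hZ hz']
    calc D.n k * D.n k' * c2 D R i j z z'
        = ∑ i' ∈ D.blk k, ∑ j' ∈ D.blk k', c2 D R i' j' z z' := by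
          rw [Finset.sum_congr rfl (fun i' hi' => Finset.sum_congr rfl
            (fun j' hj' => hconst i' hi' j' hj'))]
          rw [Finset.sum_const, Finset.sum_const, smul_eq_mul, smul_eq_mul, ← mul_assoc]
          rfl
      _ = ∑ Z ∈ ZS D R, ∑ i' ∈ D.blk k, ∑ j' ∈ D.blk k',
            (if Z i' = z then 1 else 0) * (if Z j' = z' then 1 else 0) := by
          refine Eq.trans (Finset.sum_congr rfl fun i' _ => ?_) Finset.sum_comm
          rw [Finset.sum_congr rfl (fun j' _ => c2_eq_sum D R i' j' z z')]
          exact Finset.sum_comm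
      _ = (ZS D R).card * ((D.n k / D.t) * (D.n k' / D.t)) := by
          rw [Finset.sum_congr rfl hinner, Finset.sum_const, smul_eq_mul]
  have htk : D.n k / D.t * D.t = D.n k := Nat.div_mul_cancel (D.hdvd k)
  have htk' : D.n k' / D.t * D.t = D.n k' := Nat.div_mul_cancel (D.hdvd k')
  refine Nat.eq_of_mul_eq_mul_left (D.hnpos k) ?_
  refine Nat.eq_of_mul_eq_mul_left (D.hnpos k') ?_
  calc D.n k' * (D.n k * (D.t * D.t * c2 D R i j z z'))
      = (D.t * D.t) * (D.n k * D.n k' * c2 D R i j z z') := by ring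
    _ = (D.t * D.t) * ((ZS D R).card * ((D.n k / D.t) * (D.n k' / D.t))) := by rw [htot]
    _ = (ZS D R).card * ((D.n k / D.t * D.t) * (D.n k' / D.t * D.t)) := by ring
    _ = D.n k' * (D.n k * (ZS D R).card) := by rw [htk, htk']; ring

lemma exists_perm_map {α : Type*} [Fintype α] [DecidableEq α] {s s' : Finset α}
    (h : s.card = s'.card) : ∃ π : Equiv.Perm α, ∀ x, x ∈ s ↔ π x ∈ s' := by
  have hc : (sᶜ : Finset α).card = (s'ᶜ : Finset α).card := by
    rw [Finset.card_compl, Finset.card_compl, h]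
  let e1 : {x // x ∈ s} ≃ {x // x ∈ s'} := Finset.equivOfCardEq h
  let e2 : {x // x ∈ sᶜ} ≃ {x // x ∈ s'ᶜ} := Finset.equivOfCardEq hc
  let e2' : {x // ¬ x ∈ s} ≃ {x // ¬ x ∈ s'} :=
    ((Equiv.subtypeEquivRight (fun x => Finset.mem_compl)).symm.trans e2).trans
      (Equiv.subtypeEquivRight (fun x => Finset.mem_compl))
  refine ⟨(Equiv.sumCompl (· ∈ s)).symm.trans ((e1.sumCongr e2').trans
    (Equiv.sumCompl (· ∈ s'))), fun x => ?_⟩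
  by_cases hx : x ∈ s
  · have h1 : ((Equiv.sumCompl (· ∈ s)).symm x) = Sum.inl ⟨x, hx⟩ :=
      Equiv.sumCompl_symm_apply_of_pos hx
    simp only [Equiv.trans_apply, h1, Equiv.sumCongr_apply, Sum.map_inl,
      Equiv.sumCompl_apply_inl]
    exact ⟨fun _ => (e1 ⟨x, hx⟩).2, fun _ => hx⟩
  · have h1 : ((Equiv.sumCompl (· ∈ s)).symm x) = Sum.inr ⟨x, hx⟩ :=
      Equiv.sumCompl_symm_apply_of_neg hx
    simp only [Equiv.trans_apply, h1, Equiv.sumCongr_apply, Sum.map_inr,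
      Equiv.sumCompl_apply_inr]
    exact ⟨fun h' => absurd h' hx, fun h' => absurd h' (e2' ⟨x, hx⟩).2⟩

lemma card_Rk {R} (hR : D.ValidR R) (k : Fin D.K) : (R k).card = D.t := by
  apply D.hrcard
  intro h0
  have h1 := hR (R k)
  rw [h0, Finset.card_eq_zero] at h1
  have hk : k ∈ Finset.univ.filter (fun k' => R k' = R k) := by simp
  rw [h1] at hk
  exact absurd hk (Finset.notMem_empty k)

lemma validZ_relabel {R R'} (π : Fin D.K → Equiv.Perm (Fin T))
    (hπ : ∀ k x, x ∈ R k ↔ π k x ∈ R' k) {Z} (hZ : D.ValidZ R Z) :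
    D.ValidZ R' (fun i => π (D.b i) (Z i)) := by
  refine ⟨fun i => (hπ (D.b i) (Z i)).mp (hZ.1 i), fun k z hz => ?_⟩
  have hz' : (π k).symm z ∈ R k := by
    rw [hπ k, Equiv.apply_symm_apply]
    exact hz
  rw [← hZ.2 k _ hz']
  congr 1
  refine Finset.filter_congr fun i hi => ?_
  rw [mem_blk] at hi
  simp only [hi]
  exact ⟨fun h => by rw [← h, Equiv.symm_apply_apply],
    fun h => by rw [h, Equiv.apply_symm_apply]⟩

lemma ZS_card_const {R R'} (hR : D.ValidR R) (hR' : D.ValidR R') :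
    (ZS D R).card = (ZS D R').card := by
  have hcard : ∀ k, (R k).card = (R' k).card := fun k =>
    (card_Rk D hR k).trans (card_Rk D hR' k).symm
  choose π hπ using fun k => exists_perm_map (hcard k)
  have hπ' : ∀ k x, x ∈ R' k ↔ (π k).symm x ∈ R k := by
    intro k x
    rw [hπ k, Equiv.apply_symm_apply]
  apply Finset.card_bij' (fun Z _ i => π (D.b i) (Z i)) (fun Z _ i => (π (D.b i)).symm (Z i))
  · intro Z hZ
    exact (mem_ZS D).mpr (validZ_relabel D π hπ ((mem_ZS D).mp hZ))
  · intro Z hZ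
    exact (mem_ZS D).mpr (validZ_relabel D (fun k => (π k).symm) hπ' ((mem_ZS D).mp hZ))
  · intro Z _
    funext i
    simp
  · intro Z _
    funext i
    simp

/-- Stage-1 one-block count. -/
def d1 (k : Fin D.K) (z : Fin T) : ℕ := ((V D).filter (fun R => z ∈ R k)).card

/-- Stage-1 same-block pair count. -/
def d2 (k : Fin D.K) (z z' : Fin T) : ℕ :=
  ((V D).filter (fun R => z ∈ R k ∧ z' ∈ R k)).card

/-- Stage-1 cross-block pair count. -/
def e2 (k k' : Fin D.K) (z z' : Fin T) : ℕ :=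
  ((V D).filter (fun R => z ∈ R k ∧ z' ∈ R k')).card

lemma d1_eq_sum (k z) : d1 D k z = ∑ R ∈ V D, if z ∈ R k then 1 else 0 :=
  Finset.card_filter _ _

lemma e2_eq_sum (k k' z z') : e2 D k k' z z'
    = ∑ R ∈ V D, (if z ∈ R k then 1 else 0) * (if z' ∈ R k' then 1 else 0) := by
  rw [e2, Finset.card_filter]
  refine Finset.sum_congr rfl fun R _ => ?_
  by_cases h1 : z ∈ R k <;> by_cases h2 : z' ∈ R k' <;> simp [h1, h2]

lemma perR_count {R} (hR : D.ValidR R) (Q : Finset (Fin T) → Prop) [DecidablePred Q] :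
    ∑ k : Fin D.K, (if Q (R k) then (1 : ℕ) else 0)
      = ∑ ω ∈ Finset.univ.filter Q, D.r ω := by
  rw [← Finset.sum_fiberwise_of_maps_to (g := R) (fun k _ => Finset.mem_univ (R k))
    (fun k => if Q (R k) then (1 : ℕ) else 0)]
  rw [Finset.sum_filter]
  refine Finset.sum_congr rfl fun ω _ => ?_
  have hc : ∀ k ∈ Finset.univ.filter (fun k => R k = ω),
      (if Q (R k) then (1 : ℕ) else 0) = if Q ω then 1 else 0 := by
    intro k hk
    rw [(Finset.mem_filter.mp hk).2]
  rw [Finset.sum_congr rfl hc, Finset.sum_const, hR ω, smul_eq_mul]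
  by_cases h : Q ω <;> simp [h]

lemma perR_single {R} (hR : D.ValidR R) (z : Fin T) :
    ∑ k : Fin D.K, (if z ∈ R k then (1 : ℕ) else 0) = D.Lcount z := by
  rw [IBD.Lcount]
  exact perR_count D hR (fun ω => z ∈ ω)

lemma perR_pair {R} (hR : D.ValidR R) (z z' : Fin T) :
    ∑ k : Fin D.K, (if z ∈ R k then (1 : ℕ) else 0) * (if z' ∈ R k then 1 else 0)
      = D.lcount z z' := by
  have h : ∀ k : Fin D.K, (if z ∈ R k then (1:ℕ) else 0) * (if z' ∈ R k then 1 else 0)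
      = if (z ∈ R k ∧ z' ∈ R k) then 1 else 0 := fun k => by
    by_cases h1 : z ∈ R k <;> by_cases h2 : z' ∈ R k <;> simp [h1, h2]
  rw [Finset.sum_congr rfl fun k _ => h k, IBD.lcount]
  exact perR_count D hR (fun ω => z ∈ ω ∧ z' ∈ ω)

lemma d1_const (k k' : Fin D.K) (z : Fin T) : d1 D k z = d1 D k' z := by
  have h := sum_V_comp D (Equiv.swap k k')
    (fun R => if z ∈ R k then (1 : ℕ) else 0)
  simp only [Function.comp_apply, Equiv.swap_apply_left] at h
  rw [d1_eq_sum, d1_eq_sum, ← h]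

lemma d1_value (k : Fin D.K) (z : Fin T) :
    D.K * d1 D k z = (V D).card * D.Lcount z := by
  have h1 : ∑ k' : Fin D.K, d1 D k' z = D.K * d1 D k z := by
    rw [Finset.sum_congr rfl (fun k' _ => d1_const D k' k z), Finset.sum_const,
      smul_eq_mul, Finset.card_univ, Fintype.card_fin]
  rw [← h1]
  calc ∑ k' : Fin D.K, d1 D k' z
      = ∑ k' : Fin D.K, ∑ R ∈ V D, if z ∈ R k' then 1 else 0 :=
        Finset.sum_congr rfl fun k' _ => d1_eq_sum D k' z
    _ = ∑ R ∈ V D, ∑ k' : Fin D.K, if z ∈ R k' then 1 else 0 := Finset.sum_comm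
    _ = ∑ R ∈ V D, D.Lcount z :=
        Finset.sum_congr rfl fun R hR => perR_single D ((mem_V D).mp hR) z
    _ = (V D).card * D.Lcount z := by rw [Finset.sum_const, smul_eq_mul]

lemma d2_eq_sum (k : Fin D.K) (z z' : Fin T) :
    d2 D k z z' = ∑ R ∈ V D, if (z ∈ R k ∧ z' ∈ R k) then 1 else 0 :=
  Finset.card_filter _ _

lemma d2_const (k k' : Fin D.K) (z z' : Fin T) : d2 D k z z' = d2 D k' z z' := by
  have h := sum_V_comp D (Equiv.swap k k')
    (fun R => if (z ∈ R k ∧ z' ∈ R k) then (1 : ℕ) else 0)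
  simp only [Function.comp_apply, Equiv.swap_apply_left] at h
  rw [d2_eq_sum, d2_eq_sum, ← h]

lemma d2_value (k : Fin D.K) (z z' : Fin T) :
    D.K * d2 D k z z' = (V D).card * D.lcount z z' := by
  have h1 : ∑ k' : Fin D.K, d2 D k' z z' = D.K * d2 D k z z' := by
    rw [Finset.sum_congr rfl (fun k' _ => d2_const D k' k z z'), Finset.sum_const,
      smul_eq_mul, Finset.card_univ, Fintype.card_fin]
  rw [← h1]
  calc ∑ k' : Fin D.K, d2 D k' z z'
      = ∑ k' : Fin D.K, ∑ R ∈ V D, if (z ∈ R k' ∧ z' ∈ R k') then 1 else 0 :=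
        Finset.sum_congr rfl fun k' _ => d2_eq_sum D k' z z'
    _ = ∑ R ∈ V D, ∑ k' : Fin D.K, if (z ∈ R k' ∧ z' ∈ R k') then 1 else 0 := Finset.sum_comm
    _ = ∑ R ∈ V D, D.lcount z z' := by
        refine Finset.sum_congr rfl fun R hR => ?_
        rw [IBD.lcount]
        exact perR_count D ((mem_V D).mp hR) (fun ω => z ∈ ω ∧ z' ∈ ω)
    _ = (V D).card * D.lcount z z' := by rw [Finset.sum_const, smul_eq_mul]

lemma e2_swap_a {k j j' : Fin D.K} (hji : j ≠ k) (hj'i : j' ≠ k) (z z' : Fin T) :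
    e2 D k j z z' = e2 D k j' z z' := by
  rcases eq_or_ne j j' with h | h
  · rw [h]
  have hcomp := sum_V_comp D (Equiv.swap j j')
    (fun R => (if z ∈ R k then (1 : ℕ) else 0) * (if z' ∈ R j' then 1 else 0))
  have hfix : ∀ R : Fin D.K → Finset (Fin T), R (Equiv.swap j j' k) = R k := fun R => by
    rw [Equiv.swap_apply_of_ne_of_ne (Ne.symm hji) (Ne.symm hj'i)]
  simp only [Function.comp_apply, Equiv.swap_apply_right, hfix] at hcomp
  rw [e2_eq_sum, e2_eq_sum, ← hcomp]

lemma e2_swap_b {i i' j : Fin D.K} (hij : i ≠ j) (hi'j : i' ≠ j) (z z' : Fin T) :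
    e2 D i j z z' = e2 D i' j z z' := by
  rcases eq_or_ne i i' with h | h
  · rw [h]
  have hcomp := sum_V_comp D (Equiv.swap i i')
    (fun R => (if z ∈ R i' then (1 : ℕ) else 0) * (if z' ∈ R j then 1 else 0))
  have hfix : ∀ R : Fin D.K → Finset (Fin T), R (Equiv.swap i i' j) = R j := fun R => by
    rw [Equiv.swap_apply_of_ne_of_ne (Ne.symm hij) (Ne.symm hi'j)]
  simp only [Function.comp_apply, Equiv.swap_apply_right, hfix] at hcomp
  rw [e2_eq_sum, e2_eq_sum, ← hcomp]

lemma e2_swap_c {i j : Fin D.K} (z z' : Fin T) :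
    e2 D i j z z' = e2 D j i z z' := by
  have hcomp := sum_V_comp D (Equiv.swap i j)
    (fun R => (if z ∈ R i then (1 : ℕ) else 0) * (if z' ∈ R j then 1 else 0))
  simp only [Function.comp_apply, Equiv.swap_apply_left, Equiv.swap_apply_right] at hcomp
  rw [e2_eq_sum, e2_eq_sum, ← hcomp]

lemma e2_const {k k' : Fin D.K} (hkk' : k ≠ k') (z z' : Fin T) :
    ∀ a b : Fin D.K, a ≠ b → e2 D a b z z' = e2 D k k' z z' := by
  intro a b hab
  refine pair_const (s := (Finset.univ : Finset (Fin D.K))) (fun a b => e2 D a b z z')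
    (fun a _ b _ c _ hba hca => e2_swap_a D hba hca z z')
    (fun a _ b _ c _ hac hbc => e2_swap_b D hac hbc z z')
    (fun a _ b _ _ => e2_swap_c D z z')
    a (Finset.mem_univ a) b (Finset.mem_univ b) k (Finset.mem_univ k)
    k' (Finset.mem_univ k') hab hkk'

lemma e2_value {k k' : Fin D.K} (hkk' : k ≠ k') (z z' : Fin T) :
    D.K * (D.K - 1) * e2 D k k' z z' + (V D).card * D.lcount z z'
      = (V D).card * (D.Lcount z * D.Lcount z') := by
  have hL : ∑ a : Fin D.K, ∑ b ∈ Finset.univ.erase a, e2 D a b z z'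
      = D.K * (D.K - 1) * e2 D k k' z z' := by
    rw [Finset.sum_congr rfl (fun a _ => Finset.sum_congr rfl (fun b hb =>
      e2_const D hkk' z z' a b (Finset.ne_of_mem_erase hb).symm))]
    rw [Finset.sum_congr rfl (fun a ha => by
      rw [Finset.sum_const, Finset.card_erase_of_mem ha, smul_eq_mul])]
    rw [Finset.sum_const, smul_eq_mul, ← mul_assoc, Finset.card_univ, Fintype.card_fin]
  rw [← hL]
  have key : ∀ R ∈ V D,
      (∑ a : Fin D.K, ∑ b ∈ Finset.univ.erase a,
        (if z ∈ R a then (1 : ℕ) else 0) * (if z' ∈ R b then 1 else 0))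
      + D.lcount z z' = D.Lcount z * D.Lcount z' := by
    intro R hR
    have hvR := (mem_V D).mp hR
    have hsplit : ∀ a : Fin D.K,
        ∑ b ∈ Finset.univ.erase a, (if z ∈ R a then (1:ℕ) else 0) * (if z' ∈ R b then 1 else 0)
        + (if z ∈ R a then (1:ℕ) else 0) * (if z' ∈ R a then 1 else 0)
        = ∑ b : Fin D.K, (if z ∈ R a then (1:ℕ) else 0) * (if z' ∈ R b then 1 else 0) :=
      fun a => Finset.sum_erase_add _ _ (Finset.mem_univ a)
    calc (∑ a : Fin D.K, ∑ b ∈ Finset.univ.erase a,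
            (if z ∈ R a then (1:ℕ) else 0) * (if z' ∈ R b then 1 else 0)) + D.lcount z z'
        = ∑ a : Fin D.K, (∑ b ∈ Finset.univ.erase a,
            (if z ∈ R a then (1:ℕ) else 0) * (if z' ∈ R b then 1 else 0)
            + (if z ∈ R a then (1:ℕ) else 0) * (if z' ∈ R a then 1 else 0)) := by
          rw [Finset.sum_add_distrib, perR_pair D hvR]
      _ = ∑ a : Fin D.K, ∑ b : Fin D.K,
            (if z ∈ R a then (1:ℕ) else 0) * (if z' ∈ R b then 1 else 0) :=
          Finset.sum_congr rfl fun a _ => hsplit a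
      _ = (∑ a : Fin D.K, if z ∈ R a then (1:ℕ) else 0)
            * (∑ b : Fin D.K, if z' ∈ R b then (1:ℕ) else 0) := by
          rw [Finset.sum_mul_sum]
      _ = D.Lcount z * D.Lcount z' := by
          rw [perR_single D hvR, perR_single D hvR]
  calc ∑ a : Fin D.K, ∑ b ∈ Finset.univ.erase a, e2 D a b z z' + (V D).card * D.lcount z z'
      = ∑ R ∈ V D, ((∑ a : Fin D.K, ∑ b ∈ Finset.univ.erase a,
          (if z ∈ R a then (1:ℕ) else 0) * (if z' ∈ R b then 1 else 0)) + D.lcount z z') := by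
        rw [Finset.sum_add_distrib, Finset.sum_const, smul_eq_mul]
        congr 1
        calc ∑ a : Fin D.K, ∑ b ∈ Finset.univ.erase a, e2 D a b z z'
            = ∑ a : Fin D.K, ∑ b ∈ Finset.univ.erase a, ∑ R ∈ V D,
                (if z ∈ R a then (1:ℕ) else 0) * (if z' ∈ R b then 1 else 0) :=
              Finset.sum_congr rfl fun a _ => Finset.sum_congr rfl fun b _ =>
                e2_eq_sum D a b z z'
          _ = ∑ R ∈ V D, ∑ a : Fin D.K, ∑ b ∈ Finset.univ.erase a,
                (if z ∈ R a then (1:ℕ) else 0) * (if z' ∈ R b then 1 else 0) := by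
              refine Eq.trans (Finset.sum_congr rfl fun a _ => Finset.sum_comm) ?_
              exact Finset.sum_comm
    _ = ∑ R ∈ V D, D.Lcount z * D.Lcount z' := Finset.sum_congr rfl key
    _ = (V D).card * (D.Lcount z * D.Lcount z') := by rw [Finset.sum_const, smul_eq_mul]

lemma n_pos (k : Fin D.K) : 0 < (D.n k : ℝ) := by exact_mod_cast D.hnpos k

lemma n_ne (k : Fin D.K) : (D.n k : ℝ) ≠ 0 := ne_of_gt (n_pos D k)

lemma t_pos : 0 < (D.t : ℝ) := by
  have h : 0 < D.t := lt_of_lt_of_le (by norm_num) D.ht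
  exact_mod_cast h

lemma t_ne : (D.t : ℝ) ≠ 0 := ne_of_gt (t_pos D)

lemma t_le_n (k : Fin D.K) : D.t ≤ D.n k := Nat.le_of_dvd (D.hnpos k) (D.hdvd k)

lemma two_le_n (k : Fin D.K) : 2 ≤ D.n k := le_trans D.ht (t_le_n D k)

lemma n1_ne (k : Fin D.K) : (D.n k : ℝ) - 1 ≠ 0 := by
  have h : (2 : ℝ) ≤ (D.n k : ℝ) := by exact_mod_cast two_le_n D k
  intro hc
  nlinarith

lemma ndiv_cast (k : Fin D.K) : ((D.n k / D.t : ℕ) : ℝ) = (D.n k : ℝ) / D.t :=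
  Nat.cast_div (D.hdvd k) (t_ne D)

lemma K_pos : 0 < (D.K : ℝ) := by exact_mod_cast D.hK

lemma K_ne : (D.K : ℝ) ≠ 0 := ne_of_gt (K_pos D)

variable {C₀ : ℕ}

lemma rc1 {R} (hCR : (ZS D R).card = C₀) {k z} (hz : z ∈ R k) {i} (hi : D.b i = k) :
    (c1 D R i z : ℝ) = C₀ / D.t := by
  have h := c1_value D hz hi
  rw [hCR] at h
  have h' : (D.t : ℝ) * (c1 D R i z : ℝ) = C₀ := by exact_mod_cast h
  rw [eq_div_iff (t_ne D)]
  linarith [h']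

lemma rc2_cross {R k k'} (hCR : (ZS D R).card = C₀) (hkk' : k ≠ k') {z z'} (hz : z ∈ R k)
    (hz' : z' ∈ R k') {i j} (hi : D.b i = k) (hj : D.b j = k') :
    (c2 D R i j z z' : ℝ) = C₀ / (D.t * D.t) := by
  have h := c2_value_cross D hkk' hz hz' hi hj
  rw [hCR] at h
  have h' : (D.t : ℝ) * (D.t : ℝ) * (c2 D R i j z z' : ℝ) = C₀ := by exact_mod_cast h
  rw [eq_div_iff (mul_ne_zero (t_ne D) (t_ne D))]
  linarith [h']

lemma rc2_same {R k z z'} (hCR : (ZS D R).card = C₀) (hz : z ∈ R k) (hz' : z' ∈ R k)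
    {i j} (hi : D.b i = k) (hj : D.b j = k) (hij : i ≠ j) :
    (c2 D R i j z z' : ℝ)
      = C₀ * ((D.n k / D.t) * ((D.n k : ℝ) / D.t)
          - (if z = z' then (D.n k : ℝ) / D.t else 0))
        / ((D.n k : ℝ) * ((D.n k : ℝ) - 1)) := by
  have h := c2_total_same D hz hz' hi hj hij
  rw [hCR] at h
  have hc := congrArg (fun m : ℕ => (m : ℝ)) h
  push_cast [ndiv_cast D k, Nat.cast_sub (le_trans (by norm_num : 1 ≤ 2) (two_le_n D k)),
    apply_ite (fun m : ℕ => (m : ℝ))] at hc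
  have hden : (D.n k : ℝ) * ((D.n k : ℝ) - 1) ≠ 0 := mul_ne_zero (n_ne D k) (n1_ne D k)
  rw [eq_div_iff hden]
  ring_nf at hc ⊢
  linarith [hc]

lemma Yhatk_zero {R Z k z} (hz : z ∉ R k) : D.Yhatk (R, Z) k z = 0 := by
  rw [IBD.Yhatk, if_neg hz]

lemma Yhatk_pos {R Z k z} (hz : z ∈ R k) :
    D.Yhatk (R, Z) k z
      = (∑ i ∈ D.blk k, if Z i = z then D.Y i z else 0) / ((D.n k : ℝ) / D.t) := by
  rw [IBD.Yhatk, if_pos hz, Finset.sum_filter]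

lemma sum_sum_const_mul {ι κ : Type*} (s : Finset ι) (t : Finset κ) (c : ℝ)
    (A : ι → ℝ) (B : κ → ℝ) :
    ∑ i ∈ s, ∑ j ∈ t, c * (A i * B j) = c * ((∑ i ∈ s, A i) * (∑ j ∈ t, B j)) := by
  rw [Finset.sum_mul_sum, Finset.mul_sum]
  refine Finset.sum_congr rfl fun i _ => ?_
  rw [Finset.mul_sum]

lemma sum_offdiag {ι : Type*} [DecidableEq ι] (s : Finset ι) (f g : ι → ℝ) :
    ∑ i ∈ s, ∑ j ∈ s.erase i, f i * g j
      = (∑ i ∈ s, f i) * (∑ i ∈ s, g i) - ∑ i ∈ s, f i * g i := by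
  have h : ∀ i ∈ s, ∑ j ∈ s.erase i, f i * g j = f i * (∑ j ∈ s, g j) - f i * g i := by
    intro i hi
    rw [← Finset.mul_sum, Finset.sum_erase_eq_sub hi, mul_sub]
  rw [Finset.sum_congr rfl h, Finset.sum_sub_distrib, ← Finset.sum_mul]

lemma sum_sq_dev {ι : Type*} (s : Finset ι) (f : ι → ℝ) (c : ℝ) :
    ∑ i ∈ s, (f i - c) ^ 2
      = (∑ i ∈ s, f i ^ 2) - 2 * c * (∑ i ∈ s, f i) + s.card * c ^ 2 := by
  have h : ∀ i ∈ s, (f i - c) ^ 2 = f i ^ 2 - 2 * c * f i + c ^ 2 := fun i _ => by ring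
  rw [Finset.sum_congr rfl h, Finset.sum_add_distrib, Finset.sum_sub_distrib,
    Finset.sum_const, ← Finset.mul_sum, nsmul_eq_mul]

/-- inner second-moment reduction -/
lemma sum_prod_Yhat {R k k' z z'} (hz : z ∈ R k) (hz' : z' ∈ R k') :
    ∑ Z ∈ ZS D R, D.Yhatk (R, Z) k z * D.Yhatk (R, Z) k' z'
      = (∑ i ∈ D.blk k, ∑ j ∈ D.blk k', (c2 D R i j z z' : ℝ) * (D.Y i z * D.Y j z'))
        / (((D.n k : ℝ) / D.t) * ((D.n k' : ℝ) / D.t)) := by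
  have hstep : ∀ Z ∈ ZS D R,
      D.Yhatk (R, Z) k z * D.Yhatk (R, Z) k' z'
        = (∑ i ∈ D.blk k, ∑ j ∈ D.blk k',
            (if Z i = z then D.Y i z else 0) * (if Z j = z' then D.Y j z' else 0))
          / (((D.n k : ℝ) / D.t) * ((D.n k' : ℝ) / D.t)) := by
    intro Z _
    rw [Yhatk_pos D hz, Yhatk_pos D hz', div_mul_div_comm, ← Finset.sum_mul_sum]
  rw [Finset.sum_congr rfl hstep, ← Finset.sum_div]
  congr 1
  rw [Finset.sum_comm]
  refine Finset.sum_congr rfl fun i _ => ?_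
  rw [Finset.sum_comm]
  refine Finset.sum_congr rfl fun j _ => ?_
  have hpt : ∀ Z : Fin D.N → Fin T,
      (if Z i = z then D.Y i z else 0) * (if Z j = z' then D.Y j z' else 0)
      = if (Z i = z ∧ Z j = z') then D.Y i z * D.Y j z' else 0 := by
    intro Z
    by_cases h1 : Z i = z <;> by_cases h2 : Z j = z' <;> simp [h1, h2]
  rw [Finset.sum_congr rfl fun Z _ => hpt Z, ← Finset.sum_filter, Finset.sum_const,
    nsmul_eq_mul]
  rfl

/-- per-stage-1 first moment -/
lemma E1 {R k z} (hCR : (ZS D R).card = C₀) :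
    ∑ Z ∈ ZS D R, D.Yhatk (R, Z) k z
      = if z ∈ R k then (C₀ : ℝ) * D.Ybar k z else 0 := by
  by_cases hz : z ∈ R k
  · rw [if_pos hz]
    have hstep : ∀ Z ∈ ZS D R, D.Yhatk (R, Z) k z
        = (∑ i ∈ D.blk k, if Z i = z then D.Y i z else 0) / ((D.n k : ℝ) / D.t) :=
      fun Z _ => Yhatk_pos D hz
    rw [Finset.sum_congr rfl hstep, ← Finset.sum_div]
    have hsw : ∑ Z ∈ ZS D R, ∑ i ∈ D.blk k, (if Z i = z then D.Y i z else 0)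
        = ∑ i ∈ D.blk k, ((C₀ : ℝ) / D.t) * D.Y i z := by
      rw [Finset.sum_comm]
      refine Finset.sum_congr rfl fun i hi => ?_
      have hpt : ∀ Z : Fin D.N → Fin T, (if Z i = z then D.Y i z else 0)
          = if Z i = z then D.Y i z else 0 := fun _ => rfl
      rw [← Finset.sum_filter, Finset.sum_const, nsmul_eq_mul]
      rw [show (((ZS D R).filter (fun Z => Z i = z)).card : ℝ) = (c1 D R i z : ℝ) from rfl]
      rw [rc1 D hCR hz (mem_blk D |>.mp hi)]
    rw [hsw, ← Finset.mul_sum, IBD.Ybar]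
    field_simp [t_ne D, n_ne D k]
  · rw [if_neg hz]
    exact Finset.sum_eq_zero fun Z _ => Yhatk_zero D hz

/-- per-stage-1 cross-block second moment -/
lemma E2cross {R k k' z z'} (hCR : (ZS D R).card = C₀) (hkk' : k ≠ k')
    (hz : z ∈ R k) (hz' : z' ∈ R k') :
    ∑ Z ∈ ZS D R, D.Yhatk (R, Z) k z * D.Yhatk (R, Z) k' z'
      = (C₀ : ℝ) * (D.Ybar k z * D.Ybar k' z') := by
  rw [sum_prod_Yhat D hz hz']
  have hc2 : ∀ i ∈ D.blk k, ∀ j ∈ D.blk k',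
      (c2 D R i j z z' : ℝ) * (D.Y i z * D.Y j z')
      = ((C₀ : ℝ) / (D.t * D.t)) * (D.Y i z * D.Y j z') := by
    intro i hi j hj
    rw [rc2_cross D hCR hkk' hz hz' (mem_blk D |>.mp hi) (mem_blk D |>.mp hj)]
  rw [Finset.sum_congr rfl fun i hi => Finset.sum_congr rfl fun j hj => hc2 i hi j hj]
  rw [sum_sum_const_mul, IBD.Ybar, IBD.Ybar]
  field_simp [t_ne D, n_ne D k, n_ne D k']

lemma sum_sub_sq {ι : Type*} (s : Finset ι) (f g : ι → ℝ) :
    ∑ i ∈ s, (f i - g i) ^ 2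
      = (∑ i ∈ s, f i ^ 2) - 2 * (∑ i ∈ s, f i * g i) + ∑ i ∈ s, g i ^ 2 := by
  have h : ∀ i ∈ s, (f i - g i) ^ 2 = f i ^ 2 - 2 * (f i * g i) + g i ^ 2 := fun i _ => by ring
  rw [Finset.sum_congr rfl h, Finset.sum_add_distrib, Finset.sum_sub_distrib, ← Finset.mul_sum]

set_option maxHeartbeats 1000000 in
lemma E2same_ne {R k z z'} (hCR : (ZS D R).card = C₀) (hzz' : z ≠ z')
    (hz : z ∈ R k) (hz' : z' ∈ R k) :
    ∑ Z ∈ ZS D R, D.Yhatk (R, Z) k z * D.Yhatk (R, Z) k z'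
      = (C₀ : ℝ) * (D.Ybar k z * D.Ybar k z'
          - (D.Sk2 k z + D.Sk2 k z' - D.Sk2tau k z z') / (2 * D.n k)) := by
  rw [sum_prod_Yhat D hz hz']
  have hsplit : ∀ i ∈ D.blk k,
      ∑ j ∈ D.blk k, (c2 D R i j z z' : ℝ) * (D.Y i z * D.Y j z')
      = (∑ j ∈ (D.blk k).erase i, (c2 D R i j z z' : ℝ) * (D.Y i z * D.Y j z'))
        + (c2 D R i i z z' : ℝ) * (D.Y i z * D.Y i z') := fun i hi =>
    (Finset.sum_erase_add _ _ hi).symm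
  rw [Finset.sum_congr rfl hsplit, Finset.sum_add_distrib]
  have hdiag : ∀ i ∈ D.blk k, (c2 D R i i z z' : ℝ) * (D.Y i z * D.Y i z') = 0 := by
    intro i _
    rw [c2_diag_ne D R i hzz']
    simp
  rw [Finset.sum_eq_zero hdiag, add_zero]
  set cst : ℝ := (C₀ : ℝ) * ((D.n k / D.t) * ((D.n k : ℝ) / D.t))
      / ((D.n k : ℝ) * ((D.n k : ℝ) - 1)) with hcst
  have hval : ∀ i ∈ D.blk k, ∀ j ∈ (D.blk k).erase i,
      (c2 D R i j z z' : ℝ) * (D.Y i z * D.Y j z')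
      = cst * (D.Y i z * D.Y j z') := by
    intro i hi j hj
    rw [rc2_same D hCR hz hz' (mem_blk D |>.mp hi)
      (mem_blk D |>.mp (Finset.mem_of_mem_erase hj)) (Finset.ne_of_mem_erase hj).symm,
      if_neg hzz', sub_zero]
  rw [Finset.sum_congr rfl fun i hi => Finset.sum_congr rfl fun j hj => hval i hi j hj]
  have hpull : ∑ i ∈ D.blk k, ∑ j ∈ (D.blk k).erase i, cst * (D.Y i z * D.Y j z')
      = cst * ∑ i ∈ D.blk k, ∑ j ∈ (D.blk k).erase i, D.Y i z * D.Y j z' := by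
    rw [Finset.mul_sum]
    exact Finset.sum_congr rfl fun i _ => by rw [Finset.mul_sum]
  have hoff : ∑ i ∈ D.blk k, ∑ j ∈ (D.blk k).erase i, D.Y i z * D.Y j z'
      = (∑ i ∈ D.blk k, D.Y i z) * (∑ i ∈ D.blk k, D.Y i z')
        - ∑ i ∈ D.blk k, D.Y i z * D.Y i z' :=
    sum_offdiag (D.blk k) (fun i => D.Y i z) (fun j => D.Y j z')
  rw [hpull, hoff]
  have hcst2 : cst = (C₀ : ℝ) * (D.n k : ℝ) / ((D.t : ℝ) * D.t * ((D.n k : ℝ) - 1)) := by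
    rw [hcst, div_eq_div_iff (mul_ne_zero (n_ne D k) (n1_ne D k))
      (mul_ne_zero (mul_ne_zero (t_ne D) (t_ne D)) (n1_ne D k))]
    field_simp [t_ne D]
  rw [hcst2]
  simp only [IBD.Ybar, IBD.Sk2, IBD.Sk2tau]
  rw [sum_sq_dev, sum_sq_dev, sum_sq_dev, sum_sub_sq, Finset.sum_sub_distrib]
  have hcard : ((D.blk k).card : ℝ) = (D.n k : ℝ) := rfl
  rw [hcard]
  have hn := n_ne D k
  have ht := t_ne D
  have h1 := n1_ne D k
  set nn := (D.n k : ℝ) with hnn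
  set tt := (D.t : ℝ) with htt
  set cc := (C₀ : ℝ) with hcc
  set a1 := ∑ i ∈ D.blk k, D.Y i z with ha1
  set a2 := ∑ i ∈ D.blk k, D.Y i z' with ha2
  set q1 := ∑ i ∈ D.blk k, D.Y i z ^ 2 with hq1
  set q2 := ∑ i ∈ D.blk k, D.Y i z' ^ 2 with hq2
  set q12 := ∑ i ∈ D.blk k, D.Y i z * D.Y i z' with hq12
  field_simp
  ring

set_option maxHeartbeats 1000000 in
lemma E2same_diag {R k z} (hCR : (ZS D R).card = C₀) (hz : z ∈ R k) :
    ∑ Z ∈ ZS D R, D.Yhatk (R, Z) k z * D.Yhatk (R, Z) k z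
      = (C₀ : ℝ) * (D.Ybar k z * D.Ybar k z + ((D.t : ℝ) - 1) * D.Sk2 k z / D.n k) := by
  rw [sum_prod_Yhat D hz hz]
  have hsplit : ∀ i ∈ D.blk k,
      ∑ j ∈ D.blk k, (c2 D R i j z z : ℝ) * (D.Y i z * D.Y j z)
      = (∑ j ∈ (D.blk k).erase i, (c2 D R i j z z : ℝ) * (D.Y i z * D.Y j z))
        + (c2 D R i i z z : ℝ) * (D.Y i z * D.Y i z) := fun i hi =>
    (Finset.sum_erase_add _ _ hi).symm
  rw [Finset.sum_congr rfl hsplit, Finset.sum_add_distrib]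
  have hdiag : ∀ i ∈ D.blk k, (c2 D R i i z z : ℝ) * (D.Y i z * D.Y i z)
      = ((C₀ : ℝ) / D.t) * (D.Y i z * D.Y i z) := by
    intro i hi
    rw [c2_diag D R i rfl, rc1 D hCR hz (mem_blk D |>.mp hi)]
  set cst : ℝ := (C₀ : ℝ) * ((D.n k / D.t) * ((D.n k : ℝ) / D.t) - (D.n k : ℝ) / D.t)
      / ((D.n k : ℝ) * ((D.n k : ℝ) - 1)) with hcst
  have hval : ∀ i ∈ D.blk k, ∀ j ∈ (D.blk k).erase i,
      (c2 D R i j z z : ℝ) * (D.Y i z * D.Y j z) = cst * (D.Y i z * D.Y j z) := by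
    intro i hi j hj
    rw [rc2_same D hCR hz hz (mem_blk D |>.mp hi)
      (mem_blk D |>.mp (Finset.mem_of_mem_erase hj)) (Finset.ne_of_mem_erase hj).symm,
      if_pos rfl]
  rw [Finset.sum_congr rfl fun i hi => Finset.sum_congr rfl fun j hj => hval i hi j hj]
  rw [Finset.sum_congr rfl hdiag, ← Finset.mul_sum]
  have hpull : ∑ i ∈ D.blk k, ∑ j ∈ (D.blk k).erase i, cst * (D.Y i z * D.Y j z)
      = cst * ∑ i ∈ D.blk k, ∑ j ∈ (D.blk k).erase i, D.Y i z * D.Y j z := by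
    rw [Finset.mul_sum]
    exact Finset.sum_congr rfl fun i _ => by rw [Finset.mul_sum]
  have hoff : ∑ i ∈ D.blk k, ∑ j ∈ (D.blk k).erase i, D.Y i z * D.Y j z
      = (∑ i ∈ D.blk k, D.Y i z) * (∑ i ∈ D.blk k, D.Y i z)
        - ∑ i ∈ D.blk k, D.Y i z * D.Y i z :=
    sum_offdiag (D.blk k) (fun i => D.Y i z) (fun j => D.Y j z)
  rw [hpull, hoff]
  have hsq : ∑ i ∈ D.blk k, D.Y i z * D.Y i z = ∑ i ∈ D.blk k, D.Y i z ^ 2 :=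
    Finset.sum_congr rfl fun i _ => (pow_two (D.Y i z)).symm
  rw [hsq]
  have hcst2 : cst = (C₀ : ℝ) * ((D.n k : ℝ) - D.t)
      / ((D.t : ℝ) * D.t * ((D.n k : ℝ) - 1)) := by
    rw [hcst, div_eq_div_iff (mul_ne_zero (n_ne D k) (n1_ne D k))
      (mul_ne_zero (mul_ne_zero (t_ne D) (t_ne D)) (n1_ne D k))]
    field_simp [t_ne D]
  rw [hcst2]
  simp only [IBD.Ybar, IBD.Sk2]
  rw [sum_sq_dev]
  have hcard : ((D.blk k).card : ℝ) = (D.n k : ℝ) := rfl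
  rw [hcard]
  have hn := n_ne D k
  have ht := t_ne D
  have h1 := n1_ne D k
  set nn := (D.n k : ℝ) with hnn
  set tt := (D.t : ℝ) with htt
  set cc := (C₀ : ℝ) with hcc
  set a1 := ∑ i ∈ D.blk k, D.Y i z with ha1
  set q1 := ∑ i ∈ D.blk k, D.Y i z ^ 2 with hq1
  field_simp
  ring

lemma rd1 (k : Fin D.K) (z : Fin T) :
    (d1 D k z : ℝ) = ((V D).card : ℝ) * D.p z := by
  have hc : (D.K : ℝ) * (d1 D k z : ℝ) = ((V D).card : ℝ) * (D.Lcount z : ℝ) := by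
    exact_mod_cast d1_value D k z
  rw [IBD.p, mul_div_assoc', eq_div_iff (K_ne D)]
  linarith [hc]

lemma rd2 (k : Fin D.K) (z z' : Fin T) :
    (d2 D k z z' : ℝ) = ((V D).card : ℝ) * D.q z z' := by
  have hc : (D.K : ℝ) * (d2 D k z z' : ℝ) = ((V D).card : ℝ) * (D.lcount z z' : ℝ) := by
    exact_mod_cast d2_value D k z z'
  rw [IBD.q, mul_div_assoc', eq_div_iff (K_ne D)]
  linarith [hc]

lemma K1_ne (hK2 : 2 ≤ D.K) : (D.K : ℝ) - 1 ≠ 0 := by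
  have h : (2 : ℝ) ≤ (D.K : ℝ) := by exact_mod_cast hK2
  intro hc
  nlinarith

lemma re2 (hK2 : 2 ≤ D.K) {k k' : Fin D.K} (hkk' : k ≠ k') (z z' : Fin T) :
    (e2 D k k' z z' : ℝ)
      = ((V D).card : ℝ) * (((D.Lcount z : ℝ) * (D.Lcount z' : ℝ) - (D.lcount z z' : ℝ))
        / ((D.K : ℝ) * ((D.K : ℝ) - 1))) := by
  have hc : (D.K : ℝ) * ((D.K - 1 : ℕ) : ℝ) * (e2 D k k' z z' : ℝ)
      + ((V D).card : ℝ) * (D.lcount z z' : ℝ)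
      = ((V D).card : ℝ) * ((D.Lcount z : ℝ) * (D.Lcount z' : ℝ)) := by
    exact_mod_cast e2_value D hkk' z z'
  rw [Nat.cast_sub (le_trans (by norm_num) hK2), Nat.cast_one] at hc
  have hden : (D.K : ℝ) * ((D.K : ℝ) - 1) ≠ 0 := mul_ne_zero (K_ne D) (K1_ne D hK2)
  rw [mul_div_assoc', eq_div_iff hden]
  linarith [hc]

variable {C₀ : ℕ}

/-- Ω-level first moment. -/
lemma SA (hC : ∀ R ∈ V D, (ZS D R).card = C₀) (k : Fin D.K) (z : Fin T) :
    ∑ a ∈ D.Omega, D.Yhatk a k z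
      = ((V D).card : ℝ) * C₀ * (D.p z * D.Ybar k z) := by
  rw [sum_Omega D (fun a => D.Yhatk a k z)]
  have h : ∀ R ∈ V D, ∑ Z ∈ ZS D R, D.Yhatk (R, Z) k z
      = if z ∈ R k then (C₀ : ℝ) * D.Ybar k z else 0 := fun R hR => E1 D (hC R hR)
  rw [Finset.sum_congr rfl h, ← Finset.sum_filter, Finset.sum_const, nsmul_eq_mul]
  rw [show (((V D).filter (fun R => z ∈ R k)).card : ℝ) = (d1 D k z : ℝ) from rfl, rd1]
  ring

/-- Ω-level cross-block second moment. -/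
lemma SBcross (hC : ∀ R ∈ V D, (ZS D R).card = C₀) (hK2 : 2 ≤ D.K)
    {k k' : Fin D.K} (hkk' : k ≠ k') (z z' : Fin T) :
    ∑ a ∈ D.Omega, D.Yhatk a k z * D.Yhatk a k' z'
      = ((V D).card : ℝ) * C₀
        * ((((D.Lcount z : ℝ) * (D.Lcount z' : ℝ) - (D.lcount z z' : ℝ))
            / ((D.K : ℝ) * ((D.K : ℝ) - 1)))
          * (D.Ybar k z * D.Ybar k' z')) := by
  rw [sum_Omega D (fun a => D.Yhatk a k z * D.Yhatk a k' z')]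
  have h : ∀ R ∈ V D, ∑ Z ∈ ZS D R, D.Yhatk (R, Z) k z * D.Yhatk (R, Z) k' z'
      = if (z ∈ R k ∧ z' ∈ R k') then (C₀ : ℝ) * (D.Ybar k z * D.Ybar k' z') else 0 := by
    intro R hR
    by_cases h1 : z ∈ R k
    · by_cases h2 : z' ∈ R k'
      · rw [if_pos ⟨h1, h2⟩]
        exact E2cross D (hC R hR) hkk' h1 h2
      · rw [if_neg (fun hh => h2 hh.2)]
        exact Finset.sum_eq_zero fun Z _ => by rw [Yhatk_zero D h2, mul_zero]
    · rw [if_neg (fun hh => h1 hh.1)]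
      exact Finset.sum_eq_zero fun Z _ => by rw [Yhatk_zero D h1, zero_mul]
  rw [Finset.sum_congr rfl h, ← Finset.sum_filter, Finset.sum_const, nsmul_eq_mul]
  rw [show (((V D).filter (fun R => z ∈ R k ∧ z' ∈ R k')).card : ℝ)
    = (e2 D k k' z z' : ℝ) from rfl, re2 D hK2 hkk']
  ring

/-- Ω-level same-block diagonal second moment. -/
lemma SBdiag (hC : ∀ R ∈ V D, (ZS D R).card = C₀) (k : Fin D.K) (z : Fin T) :
    ∑ a ∈ D.Omega, D.Yhatk a k z * D.Yhatk a k z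
      = ((V D).card : ℝ) * C₀
        * (D.p z * (D.Ybar k z * D.Ybar k z + ((D.t : ℝ) - 1) * D.Sk2 k z / D.n k)) := by
  rw [sum_Omega D (fun a => D.Yhatk a k z * D.Yhatk a k z)]
  have h : ∀ R ∈ V D, ∑ Z ∈ ZS D R, D.Yhatk (R, Z) k z * D.Yhatk (R, Z) k z
      = if z ∈ R k then
          (C₀ : ℝ) * (D.Ybar k z * D.Ybar k z + ((D.t : ℝ) - 1) * D.Sk2 k z / D.n k)
        else 0 := by
    intro R hR
    by_cases h1 : z ∈ R k
    · rw [if_pos h1]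
      exact E2same_diag D (hC R hR) h1
    · rw [if_neg h1]
      exact Finset.sum_eq_zero fun Z _ => by rw [Yhatk_zero D h1, zero_mul]
  rw [Finset.sum_congr rfl h, ← Finset.sum_filter, Finset.sum_const, nsmul_eq_mul]
  rw [show (((V D).filter (fun R => z ∈ R k)).card : ℝ) = (d1 D k z : ℝ) from rfl, rd1]
  ring

/-- Ω-level same-block off-diagonal second moment. -/
lemma SBsame (hC : ∀ R ∈ V D, (ZS D R).card = C₀) (k : Fin D.K) {z z' : Fin T}
    (hzz' : z ≠ z') :
    ∑ a ∈ D.Omega, D.Yhatk a k z * D.Yhatk a k z'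
      = ((V D).card : ℝ) * C₀
        * (D.q z z' * (D.Ybar k z * D.Ybar k z'
            - (D.Sk2 k z + D.Sk2 k z' - D.Sk2tau k z z') / (2 * D.n k))) := by
  rw [sum_Omega D (fun a => D.Yhatk a k z * D.Yhatk a k z')]
  have h : ∀ R ∈ V D, ∑ Z ∈ ZS D R, D.Yhatk (R, Z) k z * D.Yhatk (R, Z) k z'
      = if (z ∈ R k ∧ z' ∈ R k) then
          (C₀ : ℝ) * (D.Ybar k z * D.Ybar k z'
            - (D.Sk2 k z + D.Sk2 k z' - D.Sk2tau k z z') / (2 * D.n k))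
        else 0 := by
    intro R hR
    by_cases h1 : z ∈ R k
    · by_cases h2 : z' ∈ R k
      · rw [if_pos ⟨h1, h2⟩]
        exact E2same_ne D (hC R hR) hzz' h1 h2
      · rw [if_neg (fun hh => h2 hh.2)]
        exact Finset.sum_eq_zero fun Z _ => by rw [Yhatk_zero D h2, mul_zero]
    · rw [if_neg (fun hh => h1 hh.1)]
      exact Finset.sum_eq_zero fun Z _ => by rw [Yhatk_zero D h1, zero_mul]
  rw [Finset.sum_congr rfl h, ← Finset.sum_filter, Finset.sum_const, nsmul_eq_mul]
  rw [show (((V D).filter (fun R => z ∈ R k ∧ z' ∈ R k)).card : ℝ)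
    = (d2 D k z z' : ℝ) from rfl, rd2]
  ring

lemma card_Omega_eq (hC : ∀ R ∈ V D, (ZS D R).card = C₀) :
    D.Omega.card = (V D).card * C₀ := by
  rw [card_Omega, Finset.sum_congr rfl hC, Finset.sum_const, smul_eq_mul]

lemma exists_C (hne : D.Omega.Nonempty) :
    ∃ C₀ : ℕ, 0 < C₀ ∧ 0 < (V D).card ∧ ∀ R ∈ V D, (ZS D R).card = C₀ := by
  obtain ⟨a, ha⟩ := hne
  rw [IBD.Omega, Finset.mem_filter] at ha
  obtain ⟨-, hR, hZ⟩ := ha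
  have hRV : a.1 ∈ V D := (mem_V D).mpr hR
  have hZZ : a.2 ∈ ZS D a.1 := (mem_ZS D).mpr hZ
  refine ⟨(ZS D a.1).card, Finset.card_pos.mpr ⟨a.2, hZZ⟩, Finset.card_pos.mpr ⟨a.1, hRV⟩,
    fun R hRV' => ZS_card_const D ((mem_V D).mp hRV') hR⟩

lemma sum_mul_dev {ι : Type*} (s : Finset ι) (f g : ι → ℝ) (c c' : ℝ) :
    ∑ i ∈ s, (f i - c) * (g i - c')
      = (∑ i ∈ s, f i * g i) - c' * (∑ i ∈ s, f i) - c * (∑ i ∈ s, g i)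
        + s.card * (c * c') := by
  have h : ∀ i ∈ s, (f i - c) * (g i - c')
      = f i * g i - c' * f i - c * g i + c * c' := fun i _ => by ring
  rw [Finset.sum_congr rfl h, Finset.sum_add_distrib, Finset.sum_sub_distrib,
    Finset.sum_sub_distrib, ← Finset.mul_sum, ← Finset.mul_sum, Finset.sum_const,
    nsmul_eq_mul]

lemma fexp_of_sum {α : Type*} {Ω : Finset α} (hΩ : Ω.Nonempty) {f : α → ℝ} {c : ℝ}
    (h : ∑ ω ∈ Ω, f ω = (Ω.card : ℝ) * c) : fexp Ω f = c := by
  have hm : (Ω.card : ℝ) ≠ 0 := by exact_mod_cast (Finset.card_pos.mpr hΩ).ne'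
  rw [fexp, h, mul_comm, mul_div_assoc, div_self hm, mul_one]

lemma sum_of_fexp {α : Type*} {Ω : Finset α} (hΩ : Ω.Nonempty) (f : α → ℝ) :
    ∑ ω ∈ Ω, f ω = (Ω.card : ℝ) * fexp Ω f := by
  have hm : (Ω.card : ℝ) ≠ 0 := by exact_mod_cast (Finset.card_pos.mpr hΩ).ne'
  rw [fexp, mul_div_assoc']
  field_simp

lemma fcov_eq {α : Type*} {Ω : Finset α} (hΩ : Ω.Nonempty) (f g : α → ℝ) :
    fcov Ω f g = fexp Ω (fun ω => f ω * g ω) - fexp Ω f * fexp Ω g := by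
  have hm : (Ω.card : ℝ) ≠ 0 := by exact_mod_cast (Finset.card_pos.mpr hΩ).ne'
  have key : ∑ ω ∈ Ω, (f ω - fexp Ω f) * (g ω - fexp Ω g)
      = (∑ ω ∈ Ω, f ω * g ω) - (Ω.card : ℝ) * (fexp Ω f * fexp Ω g) := by
    rw [sum_mul_dev]
    rw [show fexp Ω f = (∑ ω ∈ Ω, f ω) / Ω.card from rfl,
      show fexp Ω g = (∑ ω ∈ Ω, g ω) / Ω.card from rfl]
    field_simp
    ring
  rw [fcov, fexp, key, sub_div, mul_comm ((Ω.card : ℝ)) _, mul_div_assoc, div_self hm,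
    mul_one]
  rfl

lemma K_ge_two (hL : ∀ z, 0 < D.Lcount z) : 2 ≤ D.K := by
  have hsum : ∑ z : Fin T, D.Lcount z = D.K * D.t := by
    calc ∑ z : Fin T, D.Lcount z
        = ∑ z : Fin T, ∑ ω : Finset (Fin T), if z ∈ ω then D.r ω else 0 := by
          refine Finset.sum_congr rfl fun z _ => ?_
          rw [IBD.Lcount, Finset.sum_filter]
      _ = ∑ ω : Finset (Fin T), ∑ z : Fin T, if z ∈ ω then D.r ω else 0 := Finset.sum_comm
      _ = ∑ ω : Finset (Fin T), ω.card * D.r ω := by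
          refine Finset.sum_congr rfl fun ω _ => ?_
          rw [← Finset.sum_filter, Finset.sum_const, Finset.filter_mem_eq_inter,
            Finset.univ_inter, smul_eq_mul]
      _ = ∑ ω : Finset (Fin T), D.r ω * D.t := by
          refine Finset.sum_congr rfl fun ω _ => ?_
          by_cases h : D.r ω = 0
          · rw [h, mul_zero, zero_mul]
          · rw [D.hrcard ω h, mul_comm]
      _ = D.K * D.t := by rw [← Finset.sum_mul, D.hrK]
  have hTle : T ≤ ∑ z : Fin T, D.Lcount z := by
    calc T = ∑ _z : Fin T, 1 := by simp
      _ ≤ ∑ z : Fin T, D.Lcount z := Finset.sum_le_sum fun z _ => hL z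
  have h2 : D.t < D.K * D.t := lt_of_lt_of_le D.htT (hsum ▸ hTle)
  have ht0 : 0 < D.t := lt_of_lt_of_le (by norm_num) D.ht
  by_contra hc
  push_neg at hc
  interval_cases hK : D.K
  · omega
  · omega

lemma p_pos (hL : ∀ z, 0 < D.Lcount z) (z : Fin T) : 0 < D.p z := by
  rw [IBD.p]
  exact div_pos (by exact_mod_cast hL z) (K_pos D)

lemma Sk2tau_diag (k : Fin D.K) (z : Fin T) : D.Sk2tau k z z = 0 := by
  simp [IBD.Sk2tau]

lemma SHT2tau_diag (z : Fin T) : D.SHT2tau z z = 0 := by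
  simp [IBD.SHT2tau]

lemma lcount_diag (z : Fin T) : D.lcount z z = D.Lcount z := by
  rw [IBD.lcount, IBD.Lcount]
  congr 1
  ext ω
  simp

lemma q_diag (z : Fin T) : D.q z z = D.p z := by
  rw [IBD.q, lcount_diag, IBD.p]

lemma Lr (z : Fin T) : (D.Lcount z : ℝ) = D.p z * D.K := by
  rw [IBD.p, div_mul_cancel₀ _ (K_ne D)]

lemma lr (z z' : Fin T) : (D.lcount z z' : ℝ) = D.q z z' * D.K := by
  rw [IBD.q, div_mul_cancel₀ _ (K_ne D)]

lemma SHTcombo (z z' : Fin T) :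
    D.SHT2 z + D.SHT2 z' - D.SHT2tau z z'
      = (2 * ((D.K : ℝ)^2 * (∑ k, (D.w k)^2 * (D.Ybar k z * D.Ybar k z'))
          - (D.K : ℝ) * (D.Ybarw z * D.Ybarw z'))) / ((D.K : ℝ) - 1) := by
  rw [IBD.SHT2, IBD.SHT2, IBD.SHT2tau, ← add_div, div_sub_div_same]
  congr 1
  have hpt : ∀ k ∈ (Finset.univ : Finset (Fin D.K)),
      (((D.K : ℝ) * D.w k * D.Ybar k z - D.Ybarw z)^2
        + ((D.K : ℝ) * D.w k * D.Ybar k z' - D.Ybarw z')^2)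
        - ((D.K : ℝ) * D.w k * (D.Ybar k z - D.Ybar k z') - (D.Ybarw z - D.Ybarw z'))^2
      = 2 * (((D.K : ℝ) * D.w k * D.Ybar k z - D.Ybarw z)
          * ((D.K : ℝ) * D.w k * D.Ybar k z' - D.Ybarw z')) := fun k _ => by ring
  rw [← Finset.sum_add_distrib, ← Finset.sum_sub_distrib, Finset.sum_congr rfl hpt,
    ← Finset.mul_sum]
  have hdev : ∑ k, ((D.K : ℝ) * D.w k * D.Ybar k z - D.Ybarw z)
        * ((D.K : ℝ) * D.w k * D.Ybar k z' - D.Ybarw z')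
      = (∑ k, ((D.K : ℝ) * D.w k * D.Ybar k z) * ((D.K : ℝ) * D.w k * D.Ybar k z'))
        - D.Ybarw z' * (∑ k, (D.K : ℝ) * D.w k * D.Ybar k z)
        - D.Ybarw z * (∑ k, (D.K : ℝ) * D.w k * D.Ybar k z')
        + ((Finset.univ : Finset (Fin D.K)).card : ℝ) * (D.Ybarw z * D.Ybarw z') :=
    sum_mul_dev _ _ _ _ _
  have hs1 : ∑ k, (D.K : ℝ) * D.w k * D.Ybar k z = (D.K : ℝ) * D.Ybarw z := by
    rw [IBD.Ybarw, Finset.mul_sum]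
    exact Finset.sum_congr rfl fun k _ => by ring
  have hs2 : ∑ k, (D.K : ℝ) * D.w k * D.Ybar k z' = (D.K : ℝ) * D.Ybarw z' := by
    rw [IBD.Ybarw, Finset.mul_sum]
    exact Finset.sum_congr rfl fun k _ => by ring
  have hs3 : ∑ k, ((D.K : ℝ) * D.w k * D.Ybar k z) * ((D.K : ℝ) * D.w k * D.Ybar k z')
      = (D.K : ℝ)^2 * ∑ k, (D.w k)^2 * (D.Ybar k z * D.Ybar k z') := by
    rw [Finset.mul_sum]
    exact Finset.sum_congr rfl fun k _ => by ring
  rw [hdev, hs1, hs2, hs3, Finset.card_univ, Fintype.card_fin]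
  ring

end IBDThm

end Aux
/-- **Theorem 1.** Under the two-stage IBD randomization, the Horvitz–Thompson estimator is
unbiased and its covariance matrix is `K⁻¹(B_HT + W)`; consequently the contrast
estimator is unbiased for `τ_w(g)` with variance `K⁻¹ gᵀ(B_HT + W) g`. -/
theorem ibd_horvitz_thompson_unbiased_and_covariance
    {T : ℕ} (D : IBD T) (hL : ∀ z, 0 < D.Lcount z) (hne : D.Omega.Nonempty)
    (g : Fin T → ℝ) (hg : ∑ z, g z = 0) :
    (∀ z, fexp D.Omega (fun a => D.YhatHT a z) = D.Ybarw z) ∧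
    (∀ z z', fcov D.Omega (fun a => D.YhatHT a z) (fun a => D.YhatHT a z') =
      (1 / (D.K : ℝ)) * (D.BHT z z' + D.Wmat z z')) ∧
    fexp D.Omega (fun a => D.tauhatHT a g) = D.tauw g ∧
    fvar D.Omega (fun a => D.tauhatHT a g) =
      (1 / (D.K : ℝ)) * ∑ z, ∑ z', g z * (D.BHT z z' + D.Wmat z z') * g z' := by
  classical
  obtain ⟨C₀, hC0, hV0, hC⟩ := IBDThm.exists_C D hne
  have hK2 : 2 ≤ D.K := IBDThm.K_ge_two D hL
  have hΩ : (D.Omega.card : ℝ) = ((IBDThm.V D).card : ℝ) * C₀ := by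
    exact_mod_cast IBDThm.card_Omega_eq D hC
  have hp : ∀ z, D.p z ≠ 0 := fun z => ne_of_gt (IBDThm.p_pos D hL z)
  have hKne := IBDThm.K_ne D
  have hK1 := IBDThm.K1_ne D hK2
  -- first moments
  have hsum1 : ∀ z, ∑ a ∈ D.Omega, D.YhatHT a z = (D.Omega.card : ℝ) * D.Ybarw z := by
    intro z
    calc ∑ a ∈ D.Omega, D.YhatHT a z
        = ∑ a ∈ D.Omega, ∑ k, D.w k * D.Yhatk a k z / D.p z :=
          Finset.sum_congr rfl fun a _ => by rw [IBD.YhatHT]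
      _ = ∑ k, ∑ a ∈ D.Omega, D.w k * D.Yhatk a k z / D.p z := Finset.sum_comm
      _ = ∑ k, (D.w k / D.p z) * ∑ a ∈ D.Omega, D.Yhatk a k z := by
          refine Finset.sum_congr rfl fun k _ => ?_
          rw [Finset.mul_sum]
          exact Finset.sum_congr rfl fun a _ => by ring
      _ = ∑ k, (D.w k / D.p z) * (((IBDThm.V D).card : ℝ) * C₀ * (D.p z * D.Ybar k z)) := by
          refine Finset.sum_congr rfl fun k _ => ?_
          rw [IBDThm.SA D hC k z]
      _ = (D.Omega.card : ℝ) * D.Ybarw z := by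
          rw [IBD.Ybarw, hΩ, Finset.mul_sum]
          refine Finset.sum_congr rfl fun k _ => ?_
          field_simp [hp z]
  have hpart1 : ∀ z, fexp D.Omega (fun a => D.YhatHT a z) = D.Ybarw z := fun z =>
    IBDThm.fexp_of_sum hne (hsum1 z)
  -- second moments: reduction to blockwise sums
  have hsum2 : ∀ z z', ∑ a ∈ D.Omega, D.YhatHT a z * D.YhatHT a z'
      = ∑ k, ∑ k', (D.w k * D.w k' / (D.p z * D.p z'))
          * ∑ a ∈ D.Omega, D.Yhatk a k z * D.Yhatk a k' z' := by
    intro z z'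
    have hptw : ∀ a ∈ D.Omega, D.YhatHT a z * D.YhatHT a z'
        = ∑ k, ∑ k', (D.w k * D.w k' / (D.p z * D.p z'))
            * (D.Yhatk a k z * D.Yhatk a k' z') := by
      intro a _
      rw [IBD.YhatHT, IBD.YhatHT, Finset.sum_mul_sum]
      refine Finset.sum_congr rfl fun k _ => Finset.sum_congr rfl fun k' _ => by ring
    rw [Finset.sum_congr rfl hptw, Finset.sum_comm]
    refine Finset.sum_congr rfl fun k _ => ?_
    rw [Finset.sum_comm]
    refine Finset.sum_congr rfl fun k' _ => ?_
    rw [Finset.mul_sum]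
  -- the off-diagonal (distinct blocks) aggregated sum, for any z z'
  have hoff : ∀ z z', ∑ k, ∑ k' ∈ Finset.univ.erase k,
        (D.w k * D.w k' / (D.p z * D.p z'))
          * ∑ a ∈ D.Omega, D.Yhatk a k z * D.Yhatk a k' z'
      = ((D.Omega.card : ℝ)
          * (((D.p z * D.K) * (D.p z' * D.K) - D.q z z' * D.K)
            / ((D.K : ℝ) * ((D.K : ℝ) - 1))) / (D.p z * D.p z'))
        * (D.Ybarw z * D.Ybarw z'
            - ∑ k, (D.w k)^2 * (D.Ybar k z * D.Ybar k z')) := by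
    intro z z'
    set qcr : ℝ := ((D.p z * D.K) * (D.p z' * D.K) - D.q z z' * D.K)
        / ((D.K : ℝ) * ((D.K : ℝ) - 1)) with hqcr
    have hval : ∀ k, ∀ k' ∈ Finset.univ.erase k,
        (D.w k * D.w k' / (D.p z * D.p z'))
          * ∑ a ∈ D.Omega, D.Yhatk a k z * D.Yhatk a k' z'
        = ((D.Omega.card : ℝ) * qcr / (D.p z * D.p z'))
            * ((D.w k * D.Ybar k z) * (D.w k' * D.Ybar k' z')) := by
      intro k k' hk'
      rw [IBDThm.SBcross D hC hK2 (Finset.ne_of_mem_erase hk').symm z z',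
        IBDThm.Lr, IBDThm.Lr, IBDThm.lr, hΩ, hqcr]
      ring
    rw [Finset.sum_congr rfl fun k _ => Finset.sum_congr rfl fun k' hk' => hval k k' hk']
    have hpull : ∑ k, ∑ k' ∈ Finset.univ.erase k,
        ((D.Omega.card : ℝ) * qcr / (D.p z * D.p z'))
          * ((D.w k * D.Ybar k z) * (D.w k' * D.Ybar k' z'))
        = ((D.Omega.card : ℝ) * qcr / (D.p z * D.p z'))
          * ∑ k, ∑ k' ∈ Finset.univ.erase k,
              (D.w k * D.Ybar k z) * (D.w k' * D.Ybar k' z') := by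
      rw [Finset.mul_sum]
      exact Finset.sum_congr rfl fun k _ => by rw [Finset.mul_sum]
    have hoff2 : ∑ k, ∑ k' ∈ Finset.univ.erase k,
        (D.w k * D.Ybar k z) * (D.w k' * D.Ybar k' z')
        = (∑ k, D.w k * D.Ybar k z) * (∑ k, D.w k * D.Ybar k z')
          - ∑ k, (D.w k * D.Ybar k z) * (D.w k * D.Ybar k z') :=
      IBDThm.sum_offdiag _ _ _
    have hsq : ∑ k, (D.w k * D.Ybar k z) * (D.w k * D.Ybar k z')
        = ∑ k, (D.w k)^2 * (D.Ybar k z * D.Ybar k z') :=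
      Finset.sum_congr rfl fun k _ => by ring
    rw [hpull, hoff2, hsq, IBD.Ybarw, IBD.Ybarw]
  -- covariance
  have hcov : ∀ z z', fcov D.Omega (fun a => D.YhatHT a z) (fun a => D.YhatHT a z')
      = (1 / (D.K : ℝ)) * (D.BHT z z' + D.Wmat z z') := by
    intro z z'
    rw [IBDThm.fcov_eq hne, hpart1 z, hpart1 z']
    by_cases hzz' : z = z'
    · subst hzz'
      -- diagonal case
      have htot : ∑ a ∈ D.Omega, D.YhatHT a z * D.YhatHT a z
          = (D.Omega.card : ℝ) *
            ((D.p z * ((∑ k, (D.w k)^2 * (D.Ybar k z * D.Ybar k z))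
                + (∑ k, (D.w k)^2 * (((D.t : ℝ) - 1) * D.Sk2 k z / D.n k)))
              + (((D.p z * D.K) * (D.p z * D.K) - D.q z z * D.K)
                  / ((D.K : ℝ) * ((D.K : ℝ) - 1)))
                * (D.Ybarw z * D.Ybarw z
                    - (∑ k, (D.w k)^2 * (D.Ybar k z * D.Ybar k z))))
            / (D.p z * D.p z)) := by
        rw [hsum2 z z]
        have hsplit : ∀ k : Fin D.K, ∑ k' : Fin D.K,
            (D.w k * D.w k' / (D.p z * D.p z))
              * ∑ a ∈ D.Omega, D.Yhatk a k z * D.Yhatk a k' z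
            = (∑ k' ∈ Finset.univ.erase k, (D.w k * D.w k' / (D.p z * D.p z))
                * ∑ a ∈ D.Omega, D.Yhatk a k z * D.Yhatk a k' z)
              + (D.w k * D.w k / (D.p z * D.p z))
                * ∑ a ∈ D.Omega, D.Yhatk a k z * D.Yhatk a k z := fun k =>
          (Finset.sum_erase_add _ _ (Finset.mem_univ k)).symm
        rw [Finset.sum_congr rfl fun k _ => hsplit k, Finset.sum_add_distrib,
          hoff z z]
        have hdiagv : ∀ k ∈ (Finset.univ : Finset (Fin D.K)),
            (D.w k * D.w k / (D.p z * D.p z))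
              * ∑ a ∈ D.Omega, D.Yhatk a k z * D.Yhatk a k z
            = ((D.Omega.card : ℝ) / (D.p z * D.p z)) * (D.p z
                * ((D.w k)^2 * (D.Ybar k z * D.Ybar k z)
                  + (D.w k)^2 * (((D.t : ℝ) - 1) * D.Sk2 k z / D.n k))) := by
          intro k _
          rw [IBDThm.SBdiag D hC k z, hΩ]
          ring
        rw [Finset.sum_congr rfl hdiagv]
        rw [show ∑ k, ((D.Omega.card : ℝ) / (D.p z * D.p z)) * (D.p z
            * ((D.w k)^2 * (D.Ybar k z * D.Ybar k z)
              + (D.w k)^2 * (((D.t : ℝ) - 1) * D.Sk2 k z / D.n k)))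
          = ((D.Omega.card : ℝ) / (D.p z * D.p z)) * (D.p z
            * ((∑ k, (D.w k)^2 * (D.Ybar k z * D.Ybar k z))
              + ∑ k, (D.w k)^2 * (((D.t : ℝ) - 1) * D.Sk2 k z / D.n k)))
          from by
            rw [show (∑ k, (D.w k)^2 * (D.Ybar k z * D.Ybar k z))
                  + ∑ k, (D.w k)^2 * (((D.t : ℝ) - 1) * D.Sk2 k z / D.n k)
                = ∑ k, ((D.w k)^2 * (D.Ybar k z * D.Ybar k z)
                  + (D.w k)^2 * (((D.t : ℝ) - 1) * D.Sk2 k z / D.n k))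
              from Finset.sum_add_distrib.symm]
            rw [Finset.mul_sum, Finset.mul_sum]]
        ring
      rw [IBDThm.fexp_of_sum hne htot]
      rw [IBD.BHT, IBD.Wmat, if_pos rfl, IBDThm.SHTcombo D z z, IBDThm.q_diag D z]
      have hWsum : ∑ k, ((D.K : ℝ) * D.w k) ^ 2 * (((D.t : ℝ) - 1) * D.Sk2 k z / (D.n k : ℝ))
          = (D.K : ℝ)^2 * ∑ k, (D.w k)^2 * (((D.t : ℝ) - 1) * D.Sk2 k z / D.n k) := by
        rw [Finset.mul_sum]
        exact Finset.sum_congr rfl fun k _ => by ring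
      rw [hWsum]
      set P := D.p z with hP
      set Kr := (D.K : ℝ) with hKr
      set A1 := ∑ k, (D.w k)^2 * (D.Ybar k z * D.Ybar k z) with hA1
      set W0 := ∑ k, (D.w k)^2 * (((D.t : ℝ) - 1) * D.Sk2 k z / D.n k) with hW0
      set M1 := D.Ybarw z with hM1
      have hPne : P ≠ 0 := hp z
      field_simp
      ring
    · -- off-diagonal case
      have htot : ∑ a ∈ D.Omega, D.YhatHT a z * D.YhatHT a z'
          = (D.Omega.card : ℝ) *
            ((D.q z z' * ((∑ k, (D.w k)^2 * (D.Ybar k z * D.Ybar k z'))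
                - (∑ k, (D.w k)^2 * ((D.Sk2 k z + D.Sk2 k z' - D.Sk2tau k z z')
                    / (2 * D.n k))))
              + (((D.p z * D.K) * (D.p z' * D.K) - D.q z z' * D.K)
                  / ((D.K : ℝ) * ((D.K : ℝ) - 1)))
                * (D.Ybarw z * D.Ybarw z'
                    - (∑ k, (D.w k)^2 * (D.Ybar k z * D.Ybar k z'))))
            / (D.p z * D.p z')) := by
        rw [hsum2 z z']
        have hsplit : ∀ k : Fin D.K, ∑ k' : Fin D.K,
            (D.w k * D.w k' / (D.p z * D.p z'))
              * ∑ a ∈ D.Omega, D.Yhatk a k z * D.Yhatk a k' z'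
            = (∑ k' ∈ Finset.univ.erase k, (D.w k * D.w k' / (D.p z * D.p z'))
                * ∑ a ∈ D.Omega, D.Yhatk a k z * D.Yhatk a k' z')
              + (D.w k * D.w k / (D.p z * D.p z'))
                * ∑ a ∈ D.Omega, D.Yhatk a k z * D.Yhatk a k z' := fun k =>
          (Finset.sum_erase_add _ _ (Finset.mem_univ k)).symm
        rw [Finset.sum_congr rfl fun k _ => hsplit k, Finset.sum_add_distrib,
          hoff z z']
        have hdiagv : ∀ k ∈ (Finset.univ : Finset (Fin D.K)),
            (D.w k * D.w k / (D.p z * D.p z'))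
              * ∑ a ∈ D.Omega, D.Yhatk a k z * D.Yhatk a k z'
            = ((D.Omega.card : ℝ) / (D.p z * D.p z')) * (D.q z z'
                * ((D.w k)^2 * (D.Ybar k z * D.Ybar k z')
                  - (D.w k)^2 * ((D.Sk2 k z + D.Sk2 k z' - D.Sk2tau k z z')
                      / (2 * D.n k)))) := by
          intro k _
          rw [IBDThm.SBsame D hC k hzz', hΩ]
          ring
        rw [Finset.sum_congr rfl hdiagv]
        rw [show ∑ k, ((D.Omega.card : ℝ) / (D.p z * D.p z')) * (D.q z z'
            * ((D.w k)^2 * (D.Ybar k z * D.Ybar k z')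
              - (D.w k)^2 * ((D.Sk2 k z + D.Sk2 k z' - D.Sk2tau k z z') / (2 * D.n k))))
          = ((D.Omega.card : ℝ) / (D.p z * D.p z')) * (D.q z z'
            * ((∑ k, (D.w k)^2 * (D.Ybar k z * D.Ybar k z'))
              - ∑ k, (D.w k)^2 * ((D.Sk2 k z + D.Sk2 k z' - D.Sk2tau k z z')
                  / (2 * D.n k))))
          from by
            rw [show (∑ k, (D.w k)^2 * (D.Ybar k z * D.Ybar k z'))
                  - ∑ k, (D.w k)^2 * ((D.Sk2 k z + D.Sk2 k z' - D.Sk2tau k z z')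
                      / (2 * D.n k))
                = ∑ k, ((D.w k)^2 * (D.Ybar k z * D.Ybar k z')
                  - (D.w k)^2 * ((D.Sk2 k z + D.Sk2 k z' - D.Sk2tau k z z')
                      / (2 * D.n k)))
              from by rw [Finset.sum_sub_distrib]]
            rw [Finset.mul_sum, Finset.mul_sum]]
        ring
      rw [IBDThm.fexp_of_sum hne htot]
      rw [IBD.BHT, IBD.Wmat, if_neg hzz', IBDThm.SHTcombo D z z']
      have hWsum : ∑ k, ((D.K : ℝ) * D.w k) ^ 2
            * ((D.Sk2 k z + D.Sk2 k z' - D.Sk2tau k z z') / (D.n k : ℝ))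
          = (D.K : ℝ)^2 * (2 * ∑ k, (D.w k)^2
              * ((D.Sk2 k z + D.Sk2 k z' - D.Sk2tau k z z') / (2 * D.n k))) := by
        rw [Finset.mul_sum, Finset.mul_sum]
        refine Finset.sum_congr rfl fun k _ => ?_
        have hn := IBDThm.n_ne D k
        field_simp
      rw [hWsum]
      set P1 := D.p z with hP1
      set P2 := D.p z' with hP2
      set Qv := D.q z z' with hQv
      set Kr := (D.K : ℝ) with hKr
      set A1 := ∑ k, (D.w k)^2 * (D.Ybar k z * D.Ybar k z') with hA1
      set U0 := ∑ k, (D.w k)^2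
          * ((D.Sk2 k z + D.Sk2 k z' - D.Sk2tau k z z') / (2 * D.n k)) with hU0
      set M1 := D.Ybarw z with hM1
      set M2 := D.Ybarw z' with hM2
      have hP1ne : P1 ≠ 0 := hp z
      have hP2ne : P2 ≠ 0 := hp z'
      field_simp
      ring
  -- part 3
  have hsumtau : ∑ a ∈ D.Omega, D.tauhatHT a g = (D.Omega.card : ℝ) * D.tauw g := by
    calc ∑ a ∈ D.Omega, D.tauhatHT a g
        = ∑ a ∈ D.Omega, ∑ z, g z * D.YhatHT a z :=
          Finset.sum_congr rfl fun a _ => by rw [IBD.tauhatHT]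
      _ = ∑ z, ∑ a ∈ D.Omega, g z * D.YhatHT a z := Finset.sum_comm
      _ = ∑ z, g z * ((D.Omega.card : ℝ) * D.Ybarw z) := by
          refine Finset.sum_congr rfl fun z _ => ?_
          rw [← Finset.mul_sum, hsum1 z]
      _ = (D.Omega.card : ℝ) * D.tauw g := by
          rw [IBD.tauw, Finset.mul_sum]
          exact Finset.sum_congr rfl fun z _ => by ring
  have hpart3 : fexp D.Omega (fun a => D.tauhatHT a g) = D.tauw g :=
    IBDThm.fexp_of_sum hne hsumtau
  refine ⟨hpart1, hcov, hpart3, ?_⟩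
  -- part 4
  have hXX : ∀ z z', fexp D.Omega (fun a => D.YhatHT a z * D.YhatHT a z')
      = (1 / (D.K : ℝ)) * (D.BHT z z' + D.Wmat z z') + D.Ybarw z * D.Ybarw z' := by
    intro z z'
    have h := hcov z z'
    rw [IBDThm.fcov_eq hne, hpart1 z, hpart1 z'] at h
    linarith [h]
  have hsumtau2 : ∑ a ∈ D.Omega, D.tauhatHT a g * D.tauhatHT a g
      = (D.Omega.card : ℝ) * ∑ z, ∑ z', g z * g z'
          * ((1 / (D.K : ℝ)) * (D.BHT z z' + D.Wmat z z') + D.Ybarw z * D.Ybarw z') := by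
    have hptw : ∀ a ∈ D.Omega, D.tauhatHT a g * D.tauhatHT a g
        = ∑ z, ∑ z', (g z * g z') * (D.YhatHT a z * D.YhatHT a z') := by
      intro a _
      rw [IBD.tauhatHT, Finset.sum_mul_sum]
      refine Finset.sum_congr rfl fun z _ => Finset.sum_congr rfl fun z' _ => by ring
    rw [Finset.sum_congr rfl hptw, Finset.sum_comm, Finset.mul_sum]
    refine Finset.sum_congr rfl fun z _ => ?_
    rw [Finset.sum_comm, Finset.mul_sum]
    refine Finset.sum_congr rfl fun z' _ => ?_
    rw [← Finset.mul_sum,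
      IBDThm.sum_of_fexp hne (fun a => D.YhatHT a z * D.YhatHT a z'), hXX z z']
    ring
  rw [fvar, IBDThm.fcov_eq hne, hpart3, IBDThm.fexp_of_sum hne hsumtau2]
  rw [IBD.tauw, Finset.sum_mul_sum]
  rw [Finset.mul_sum, ← Finset.sum_sub_distrib]
  refine Finset.sum_congr rfl fun z _ => ?_
  rw [Finset.mul_sum, ← Finset.sum_sub_distrib]
  refine Finset.sum_congr rfl fun z' _ => ?_
  ring
end
end

section
/- Under Assumption 1, the diagonal entries of the asymptotic covariance matrices satisfy Σ_HT^∞(z,z) − Σ_Haj^∞(z,z) = ((p_z^∞)^{-1} − 1)·lim_{K→∞}[S_HT²(z) − S_Haj²(z)]. In particular, for any fixed K: (i) S_HT²(z) − S_Haj²(z) = 0 if w_k = 1/K for all k; (ii) S_HT²(z) − S_Haj²(z) ≥ 0 if Ȳ_k(z) is constant over all k; (iii) S_HT²(z) − S_Haj²(z) ≤ 0 if K w_k Ȳ_k(z) is constant over all k. (Corollary 1) -/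
open Finset Filter MeasureTheory
open scoped BigOperators Topology Classical

noncomputable section

/-!
On the diagonal the between-block heterogeneity terms `S²(τ(z,z))` vanish and `q_{zz} = p_z`,
so `Σ_HT(z,z) − Σ_Haj(z,z) = (p_z⁻¹ − 1)(S_HT²(z) − S_Haj²(z))` holds exactly for every design;
the limit statement follows since `p_z → p_z^∞ > 0`. For a fixed design, uniform weights make
the summands of `S_HT²` and `S_Haj²` coincide; constant block means force `Ȳ(z;w) = c` and kill
`S_Haj²`, while constant `K w_k Ȳ_k(z) = c` forces `Ȳ(z;w) = c` and kills `S_HT²`.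
-/

namespace IBD

variable {T : ℕ} (D : IBD T) (z : Fin T)

theorem q_self : D.q z z = D.p z := by
  simp only [q, p, lcount, Lcount, and_self]

theorem SHT2tau_self : D.SHT2tau z z = 0 := by
  simp [SHT2tau]

theorem SHaj2tau_self : D.SHaj2tau z z = 0 := by
  simp [SHaj2tau]

theorem SigmaHT_self_sub_SigmaHaj_self :
    D.SigmaHT z z - D.SigmaHaj z z = (1 / D.p z - 1) * (D.SHT2 z - D.SHaj2 z) := by
  -- `q_{zz} / p_z² = p_z⁻¹` also at `p_z = 0`, where both sides are the junk value `0`.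
  simp only [SigmaHT, SigmaHaj, BHT, BHaj, q_self, SHT2tau_self, SHaj2tau_self,
    div_self_mul_self', one_div]
  ring

theorem one_le_K : (1 : ℝ) ≤ D.K := by exact_mod_cast D.hK

theorem SHT2_nonneg : 0 ≤ D.SHT2 z :=
  div_nonneg (sum_nonneg fun _ _ => sq_nonneg _) (sub_nonneg.2 D.one_le_K)

theorem SHaj2_nonneg : 0 ≤ D.SHaj2 z :=
  div_nonneg (sum_nonneg fun _ _ => mul_nonneg (sq_nonneg _) (sq_nonneg _))
    (sub_nonneg.2 D.one_le_K)

theorem SHT2_eq_SHaj2_of_w_eq (hw : ∀ k, D.w k = 1 / (D.K : ℝ)) : D.SHT2 z = D.SHaj2 z := by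
  have hK : (D.K : ℝ) ≠ 0 := by exact_mod_cast D.hK.ne'
  simp only [SHT2, SHaj2, hw, mul_one_div_cancel hK, one_mul, one_pow]

theorem Ybarw_eq_of_Ybar_eq {c : ℝ} (hc : ∀ k, D.Ybar k z = c) : D.Ybarw z = c := by
  simp only [Ybarw, hc, ← sum_mul, D.hw, one_mul]

theorem SHaj2_eq_zero_of_Ybar_eq {c : ℝ} (hc : ∀ k, D.Ybar k z = c) : D.SHaj2 z = 0 := by
  simp [SHaj2, hc, D.Ybarw_eq_of_Ybar_eq z hc]

theorem Ybarw_eq_of_K_mul_w_mul_Ybar_eq {c : ℝ} (hc : ∀ k, (D.K : ℝ) * D.w k * D.Ybar k z = c) :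
    D.Ybarw z = c := by
  have hK : (D.K : ℝ) ≠ 0 := by exact_mod_cast D.hK.ne'
  calc D.Ybarw z = (∑ k, (D.K : ℝ) * D.w k * D.Ybar k z) / D.K := by
        rw [Ybarw, sum_div]
        exact sum_congr rfl fun k _ => by field_simp
    _ = c := by simp [hc, hK]

theorem SHT2_eq_zero_of_K_mul_w_mul_Ybar_eq {c : ℝ}
    (hc : ∀ k, (D.K : ℝ) * D.w k * D.Ybar k z = c) : D.SHT2 z = 0 := by
  simp [SHT2, hc, D.Ybarw_eq_of_K_mul_w_mul_Ybar_eq z hc]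

end IBD

theorem ibd_ht_vs_hajek_asymptotic_variance_general
    {T : ℕ} (t0 W0 : ℕ) (pinf : Fin T → ℝ) (qinf : Fin T → Fin T → ℝ)
    (D : ℕ → IBD T) (hA : Assumption1 D t0 W0 pinf qinf)
    (z : Fin T) (SigHTinf SigHajinf : Fin T → Fin T → ℝ)
    (hSigHT : ∀ z z', Tendsto (fun m => (D m).SigmaHT z z') atTop (𝓝 (SigHTinf z z')))
    (hSigHaj : ∀ z z', Tendsto (fun m => (D m).SigmaHaj z z') atTop (𝓝 (SigHajinf z z')))
    (A B : ℝ)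
    (hSHT : Tendsto (fun m => (D m).SHT2 z) atTop (𝓝 A))
    (hSHaj : Tendsto (fun m => (D m).SHaj2 z) atTop (𝓝 B)) :
    SigHTinf z z - SigHajinf z z = (1 / pinf z - 1) * (A - B) ∧
    (∀ (D0 : IBD T) (z0 : Fin T),
      ((∀ k, D0.w k = 1 / (D0.K : ℝ)) → D0.SHT2 z0 - D0.SHaj2 z0 = 0) ∧
      ((∃ c, ∀ k, D0.Ybar k z0 = c) → 0 ≤ D0.SHT2 z0 - D0.SHaj2 z0) ∧
      ((∃ c, ∀ k, (D0.K : ℝ) * D0.w k * D0.Ybar k z0 = c) →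
        D0.SHT2 z0 - D0.SHaj2 z0 ≤ 0)) := by
  refine ⟨?_, fun D0 z0 => ⟨?_, ?_, ?_⟩⟩
  · obtain ⟨hp, hp_pos, -⟩ := hA.2.2.2.2.1 z
    have hdiff := (hSigHT z z).sub (hSigHaj z z)
    simp only [IBD.SigmaHT_self_sub_SigmaHaj_self] at hdiff
    exact tendsto_nhds_unique hdiff
      (((tendsto_const_nhds.div hp hp_pos.ne').sub tendsto_const_nhds).mul (hSHT.sub hSHaj))
  · exact fun hw => sub_eq_zero.2 (D0.SHT2_eq_SHaj2_of_w_eq z0 hw)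
  · rintro ⟨c, hc⟩
    simpa [D0.SHaj2_eq_zero_of_Ybar_eq z0 hc] using D0.SHT2_nonneg z0
  · rintro ⟨c, hc⟩
    simpa [D0.SHT2_eq_zero_of_K_mul_w_mul_Ybar_eq z0 hc] using D0.SHaj2_nonneg z0

/-- **Corollary 1.** Comparison of the asymptotic variances of the Horvitz–Thompson and
Hájek estimators: the difference of the diagonal entries of the limit covariance matrices
is `((p_z^∞)⁻¹ − 1)·lim(S_HT²(z) − S_Haj²(z))`; moreover, for any fixed design,
(i) the difference `S_HT²(z) − S_Haj²(z)` is zero when `w_k = 1/K`, (ii) nonnegative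
when the block means are constant, and (iii) nonpositive when `K w_k Ȳ_k(z)` is
constant. -/
theorem ibd_ht_vs_hajek_asymptotic_variance
    {T : ℕ} (t0 W0 : ℕ) (pinf : Fin T → ℝ) (qinf : Fin T → Fin T → ℝ)
    (D : ℕ → IBD T) (hA : Assumption1 D t0 W0 pinf qinf)
    (hL : ∀ m z, 0 < (D m).Lcount z)
    (z : Fin T) (SigHTinf SigHajinf : Fin T → Fin T → ℝ)
    (hSigHT : ∀ z z', Tendsto (fun m => (D m).SigmaHT z z') atTop (𝓝 (SigHTinf z z')))
    (hSigHaj : ∀ z z', Tendsto (fun m => (D m).SigmaHaj z z') atTop (𝓝 (SigHajinf z z')))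
    (A B : ℝ)
    (hSHT : Tendsto (fun m => (D m).SHT2 z) atTop (𝓝 A))
    (hSHaj : Tendsto (fun m => (D m).SHaj2 z) atTop (𝓝 B)) :
    SigHTinf z z - SigHajinf z z = (1 / pinf z - 1) * (A - B) ∧
    (∀ (D0 : IBD T) (z0 : Fin T),
      ((∀ k, D0.w k = 1 / (D0.K : ℝ)) → D0.SHT2 z0 - D0.SHaj2 z0 = 0) ∧
      ((∃ c, ∀ k, D0.Ybar k z0 = c) → 0 ≤ D0.SHT2 z0 - D0.SHaj2 z0) ∧
      ((∃ c, ∀ k, (D0.K : ℝ) * D0.w k * D0.Ybar k z0 = c) →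
        D0.SHT2 z0 - D0.SHaj2 z0 ≤ 0)) :=
  ibd_ht_vs_hajek_asymptotic_variance_general t0 W0 pinf qinf D hA z SigHTinf SigHajinf hSigHT
    hSigHaj A B hSHT hSHaj
end
end
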